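/- arXiv:2105.13408 — 6 statements merged into one kernel-verified Lean document; each statement's English description precedes it below -/
import Mathlib

section
/- Let d ∈ U_1 and 0 ≤ j ≤ i ≤ n. Then φ_d(P(i,j)) ≡ 0 mod p^{i−j}. More precisely: (1) if p > 2, or d ∈ U_2, or j > 0, then for 0 ≤ j < i one has φ_d(P(i,j)) ≡ p^{i−j} mod p^{i−j+1}; (2) if p = 2, d = −1, j = 0 and i > 0, then φ_d(P(i,0)) = 0; (3) if p = 2, d ∈ −U_v ∖ −U_{v+1} for some v ≥ 2, j = 0 and i > 0, then φ_d(P(i,0)) ≡ 2^{i+v−1} mod 2^{i+v}. -/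
open scoped BigOperators

/-- `U_i = 1 + p^i ℤ` as a subset of `ℤ`. -/
def Uset (p i : ℕ) : Set ℤ := {d : ℤ | ∃ k : ℤ, d = 1 + (p : ℤ) ^ i * k}

/-- `−U_i = {−u : u ∈ U_i}` as a subset of `ℤ`. -/
def negUset (p i : ℕ) : Set ℤ := {d : ℤ | -d ∈ Uset p i}

/-- The coefficient ring `R_m = ℤ/p^mℤ`. -/
abbrev Rm (p m : ℕ) : Type := ZMod (p ^ m)

/-- The cyclic group of order `p^n`, written multiplicatively. -/
abbrev Cyc (p n : ℕ) : Type := Multiplicative (ZMod (p ^ n))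

/-- The group ring `R_m G_n` of the cyclic group of order `p^n` over `ℤ/p^mℤ`. -/
abbrev RG (p m n : ℕ) : Type := MonoidAlgebra (Rm p m) (Cyc p n)

/-- The distinguished generator `σ` of the cyclic group of order `p^n`,
viewed as an element of the group ring `R_m G_n`. -/
noncomputable def sg (p m n : ℕ) : RG p m n :=
  MonoidAlgebra.of (Rm p m) (Cyc p n) (Multiplicative.ofAdd (1 : ZMod (p ^ n)))

/-- The norm operator `P(i,j) = Σ_{k=0}^{p^{i-j}-1} σ^{k p^j}` in `R_m G_n`. -/
noncomputable def Pel (p m n i j : ℕ) : RG p m n :=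
  ∑ k ∈ Finset.range (p ^ (i - j)), sg p m n ^ (k * p ^ j)

/-- The operator `Q_d(i,j) = Σ_{k=0}^{p^{i-j}-1} (d^{p^j})^{p^{i-j}-1-k} (σ^{p^j})^k` in `R_m G_n`. -/
noncomputable def Qel (p m n : ℕ) (d : ℤ) (i j : ℕ) : RG p m n :=
  ∑ k ∈ Finset.range (p ^ (i - j)),
    ((d : RG p m n) ^ p ^ j) ^ (p ^ (i - j) - 1 - k) * sg p m n ^ (p ^ j * k)

/-- `p^a` for `a ∈ {−∞} ∪ ℕ`, with the convention `p^{−∞} = 0`. -/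
def pexp (p : ℕ) (a : WithBot ℕ) : ℕ := WithBot.recBotCoe 0 (fun k => p ^ k) a

/-- `σ^{p^a}` for `a ∈ {−∞} ∪ ℕ`, with the convention `σ^{p^{−∞}} = 0`. -/
noncomputable def sigmaPow (p m n : ℕ) (a : WithBot ℕ) : RG p m n :=
  WithBot.recBotCoe 0 (fun k => sg p m n ^ p ^ k) a

/-- `P(i,c)` for `c ∈ {−∞} ∪ ℕ`, with the convention `P(i,−∞) = 1`. -/
noncomputable def PelW (p m n i : ℕ) (c : WithBot ℕ) : RG p m n :=
  WithBot.recBotCoe 1 (fun k => Pel p m n i k) c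

/-- The submodule of relations defining `X_{a,d,m}`: the free module on generators
`y = e 0` and `x_i = e (i+1)` modulo `(σ-d)y = Σ p^i x_i` and `σ^{p^{a_i}} x_i = x_i`
(where `σ^{p^{−∞}} x_i = 0`). -/
noncomputable def Xrel (p m n : ℕ) (a : ℕ → WithBot ℕ) (d : ℤ) :
    Submodule (RG p m n) (Fin (m + 1) → RG p m n) :=
  Submodule.span (RG p m n)
    (insert
      ((sg p m n - (d : RG p m n)) •
          (Pi.single (0 : Fin (m + 1)) 1 : Fin (m + 1) → RG p m n) -
        ∑ i : Fin m, ((p : RG p m n) ^ (i : ℕ)) •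
          (Pi.single i.succ 1 : Fin (m + 1) → RG p m n))
      (Set.range fun i : Fin m =>
        (sigmaPow p m n (a (i : ℕ)) - 1) •
          (Pi.single i.succ 1 : Fin (m + 1) → RG p m n)))

/-- The `R_m G`-module `X_{a,d,m}`. -/
abbrev Xmod (p m n : ℕ) (a : ℕ → WithBot ℕ) (d : ℤ) : Type :=
  (Fin (m + 1) → RG p m n) ⧸ Xrel p m n a d

/-- The generator `y` of `X_{a,d,m}`. -/
noncomputable def Xy (p m n : ℕ) (a : ℕ → WithBot ℕ) (d : ℤ) : Xmod p m n a d :=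
  Submodule.Quotient.mk (Pi.single (0 : Fin (m + 1)) 1 : Fin (m + 1) → RG p m n)

/-- The generator `x_i` of `X_{a,d,m}`. -/
noncomputable def Xx (p m n : ℕ) (a : ℕ → WithBot ℕ) (d : ℤ) (i : Fin m) : Xmod p m n a d :=
  Submodule.Quotient.mk (Pi.single i.succ 1 : Fin (m + 1) → RG p m n)

/-- A module is indecomposable if it is nonzero and is not the direct sum of two
nonzero submodules. -/
def IsIndecomposableModule (R M : Type*) [Ring R] [AddCommGroup M] [Module R M] : Prop :=
  Nontrivial M ∧ ∀ V W : Submodule R M, IsCompl V W → V = ⊥ ∨ W = ⊥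

/-- Hypotheses (I)–(V) of Theorem 1, together with the requirement
`a ∈ {−∞,0,1,…,n}^m`. -/
def Hyp (p n m : ℕ) (a : ℕ → WithBot ℕ) (d : ℤ) : Prop :=
  (∀ i < m, a i ≤ (n : WithBot ℕ)) ∧
  d ∈ Uset p 1 ∧
  (∀ i < m, d ^ pexp p (a i) ∈ Uset p (i + 1)) ∧
  (∀ i j : ℕ, i < m → 1 ≤ j → i + j < m → a (i + j) ≠ ⊥ →
    ¬(p = 2 ∧ d ∉ Uset p 2 ∧ i = 0 ∧ a 0 = 0) →
    a i + (j : WithBot ℕ) < a (i + j)) ∧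
  (p = 2 → d ∉ Uset p 2 → a 0 = 0 → ∀ j, 1 ≤ j → j < m → a j ≠ 0) ∧
  (p = 2 → n = 1 → a 0 = ⊥) ∧
  (∀ v : ℕ, p = 2 → 2 ≤ m → 2 ≤ v → d ∈ negUset p v → d ∉ negUset p (v + 1) →
    a 0 = 0 → ∀ i, v ≤ i → i < m → ((i - (v - 1) : ℕ) : WithBot ℕ) < a i ∧ a i ≠ ⊥)

/-- The invariant `l(u)`: the dimension over `F_p` of the `F_p G`-submodule of `M/pM`
generated by the class of `u`; equivalently the least `k` with `(σ-1)^k u ∈ pM`. -/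
noncomputable def ell (p m n : ℕ) {M : Type*} [AddCommGroup M] [Module (RG p m n) M]
    (u : M) : ℕ :=
  sInf {k : ℕ | ((sg p m n - 1) ^ k) • u ∈
    (Ideal.span {(p : RG p m n)} • (⊤ : Submodule (RG p m n) M) : Submodule (RG p m n) M)}

/-- `M^⋆ = {u ∈ M : (σ-1)u = 0 and pu = 0}`. -/
def Mstar (p m n : ℕ) (M : Type*) [AddCommGroup M] [Module (RG p m n) M] : Set M :=
  {u : M | (sg p m n - 1) • u = 0 ∧ (p : RG p m n) • u = 0}
/-- The group ring `ℤG` of the cyclic group of order `p^n`. -/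
abbrev ZG (p n : ℕ) : Type := MonoidAlgebra ℤ (Cyc p n)

/-- The generator `σ` as an element of `ℤG`. -/
noncomputable def sgZ (p n : ℕ) : ZG p n :=
  MonoidAlgebra.of ℤ (Cyc p n) (Multiplicative.ofAdd (1 : ZMod (p ^ n)))

/-- The norm operator `P(i,j)` as an element of `ℤG`. -/
noncomputable def PelZ (p n i j : ℕ) : ZG p n :=
  ∑ k ∈ Finset.range (p ^ (i - j)), sgZ p n ^ (k * p ^ j)

/-- The additive map `φ_d : ℤG → ℤ` induced by `σ^t ↦ d^t` for `0 ≤ t < p^n`. -/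
noncomputable def phiZ (p n : ℕ) (d : ℤ) (f : ZG p n) : ℤ :=
  ∑ t ∈ Finset.range (p ^ n), f.coeff (Multiplicative.ofAdd ((t : ℕ) : ZMod (p ^ n))) * d ^ t

/-- The map `φ_d^{(m)} : R_m G_n → R_m` induced by `σ^t ↦ d^t` for `0 ≤ t < p^n`. -/
noncomputable def phiM (p m n : ℕ) (d : ℤ) (f : RG p m n) : Rm p m :=
  ∑ t ∈ Finset.range (p ^ n), f.coeff (Multiplicative.ofAdd ((t : ℕ) : ZMod (p ^ n))) * (d : Rm p m) ^ t

/-- The natural `R_m`-algebra homomorphism `χ_j : R_m G_i → R_m G_j` for `j ≤ i`. -/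
noncomputable def chiMap (p m : ℕ) {i j : ℕ} (h : j ≤ i) : RG p m i →+* RG p m j :=
  MonoidAlgebra.mapDomainRingHom (Rm p m)
    (AddMonoidHom.toMultiplicative
      ((ZMod.castHom (pow_dvd_pow p h) (ZMod (p ^ j))).toAddMonoidHom))

/-- Coefficient reduction `R_m G_n → R_{m-1} G_n`. -/
noncomputable def barMap (p m n : ℕ) (f : RG p m n) : RG p (m - 1) n :=
  MonoidAlgebra.ofCoeff (Finsupp.mapRange (ZMod.castHom (pow_dvd_pow p (Nat.sub_le m 1)) (ZMod (p ^ (m - 1))))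
    (map_zero _) f.coeff)

/-- `W/p^{m-1}W` is a free `R_{m-1}G_k`-module: there is an additive isomorphism with
a finite power of `R_{m-1}G_k` intertwining the actions of `σ` (and hence of the
coefficients, which act through the additive group structure). -/
def QuotFree (p m n k : ℕ) {M : Type*} [AddCommGroup M] [Module (RG p m n) M]
    (W : Submodule (RG p m n) M) : Prop :=
  ∃ (r : ℕ) (e : (W ⧸ (Ideal.span {(p : RG p m n) ^ (m - 1)} •
      (⊤ : Submodule (RG p m n) W))) ≃+ (Fin r → RG p (m - 1) k)),
    ∀ q, e (sg p m n • q) = fun s => sg p (m - 1) k * e q s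

/-! `φ_d(P(i,j))` is the geometric sum `Σ_{k<p^s} e^k` with `s = i - j` and `e = d^{p^j} ≡ 1 (mod p)`.
Cutting a geometric sum of length `p^{s+1}` into `p` blocks of length `p^s` multiplies it by
`Σ_{l<p} f^l` with `f = e^{p^s} ≡ 1`, and this factor is `≡ p (mod p²)` as soon as `p` is odd or
`f ≡ 1 (mod 4)`; by induction, `Σ_{k<p^s} e^k ≡ p^s (mod p^{s+1})`. The remaining case is `p = 2`,
`j = 0`, `d ≡ 3 (mod 4)`: pairing consecutive terms gives `Σ_{k<2^i} d^k = (1 + d) Σ_{l<2^{i-1}} d^{2l}`,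
where the second factor is `≡ 2^{i-1} (mod 2^i)` since `d² ≡ 1 (mod 4)`, so everything is governed by
the 2-adic valuation of `1 + d`. -/

open Finset

section GeomSum

variable {R : Type*}

theorem geom_sum_range_mul [CommSemiring R] (x : R) (a b : ℕ) :
    ∑ k ∈ range (a * b), x ^ k = (∑ k ∈ range a, x ^ k) * ∑ l ∈ range b, (x ^ a) ^ l := by
  induction b with
  | zero => simp
  | succ b ih =>
    rw [Nat.mul_succ, sum_range_add, ih, sum_range_succ, mul_add, ← pow_mul]
    congr 1
    rw [sum_mul]
    exact sum_congr rfl fun k _ => by rw [pow_add, mul_comm]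

variable [CommRing R] {p : ℕ}

theorem sq_dvd_geom_sum_prime_sub (hp : p.Prime) {f : R} (hf : (p : R) ∣ f - 1)
    (h4 : Odd p ∨ (4 : R) ∣ f - 1) : (p : R) ^ 2 ∣ ∑ l ∈ range p, f ^ l - p := by
  rcases hp.eq_two_or_odd' with rfl | hodd
  · have h4 : (4 : R) ∣ f - 1 := h4.resolve_left (by decide)
    rw [geom_sum_two, show f + 1 - ((2 : ℕ) : R) = f - 1 by push_cast; ring]
    norm_num
    exact h4
  · obtain ⟨w, rfl⟩ : ∃ w, f = 1 + p * w := ⟨_, eq_add_of_sub_eq' hf.choose_spec⟩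
    simpa using odd_sq_dvd_geom_sum₂_sub (R := R) 1 w hodd

theorem pow_succ_dvd_geom_sum_prime_pow_sub (hp : p.Prime) {e : R} (he : (p : R) ∣ e - 1)
    (h4 : Odd p ∨ (4 : R) ∣ e - 1) (s : ℕ) :
    (p : R) ^ (s + 1) ∣ ∑ k ∈ range (p ^ s), e ^ k - p ^ s := by
  induction s with
  | zero => simp
  | succ s ih =>
    set T := ∑ l ∈ range p, (e ^ p ^ s) ^ l
    have hT : (p : R) ^ 2 ∣ T - p :=
      sq_dvd_geom_sum_prime_sub hp (he.trans (sub_one_dvd_pow_sub_one e _))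
        (h4.imp_right fun h => h.trans (sub_one_dvd_pow_sub_one e _))
    have hpT : (p : R) ∣ T := by
      simpa using dvd_add ((dvd_pow_self (p : R) two_ne_zero).trans hT) (dvd_refl (p : R))
    have hsplit : ∑ k ∈ range (p ^ (s + 1)), e ^ k - p ^ (s + 1)
        = (∑ k ∈ range (p ^ s), e ^ k - p ^ s) * T + p ^ s * (T - p) := by
      rw [pow_succ, geom_sum_range_mul]; ring
    rw [hsplit]
    refine dvd_add ?_ ?_
    · rw [pow_succ _ (s + 1)]
      exact mul_dvd_mul ih hpT
    · rw [show (p : R) ^ (s + 1 + 1) = p ^ s * p ^ 2 by ring]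
      exact mul_dvd_mul_left _ hT

theorem two_pow_mul_dvd_geom_sum_sub_of_odd {d : R} (hd : Odd d) (s : ℕ) :
    2 ^ (s + 1) * (1 + d) ∣ ∑ k ∈ range (2 ^ (s + 1)), d ^ k - 2 ^ s * (1 + d) := by
  obtain ⟨c, rfl⟩ := hd
  have h4 : (4 : R) ∣ (2 * c + 1) ^ 2 - 1 := ⟨c ^ 2 + c, by ring⟩
  have hmain := pow_succ_dvd_geom_sum_prime_pow_sub Nat.prime_two
    (dvd_trans ⟨2, by norm_num⟩ h4) (Or.inr h4) s
  rw [pow_succ' (2 : ℕ) s, geom_sum_range_mul, geom_sum_two]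
  push_cast at hmain
  convert mul_dvd_mul_left (2 * c + 1 + 1) hmain using 1 <;> ring

theorem two_pow_dvd_geom_sum_of_odd {d : R} (hd : Odd d) (i : ℕ) :
    2 ^ i ∣ ∑ k ∈ range (2 ^ i), d ^ k := by
  rcases i with _ | s
  · simp
  · obtain ⟨c, hc⟩ := hd
    have h2 : (2 : R) ^ (s + 1) ∣ 2 ^ s * (1 + d) := ⟨c + 1, by rw [hc]; ring⟩
    exact (dvd_sub_left h2).mp
      ((dvd_mul_right _ _).trans (two_pow_mul_dvd_geom_sum_sub_of_odd ⟨c, hc⟩ s))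

end GeomSum

theorem mem_Uset_iff {p i : ℕ} {d : ℤ} : d ∈ Uset p i ↔ (p : ℤ) ^ i ∣ d - 1 :=
  ⟨fun ⟨k, hk⟩ => ⟨k, by rw [hk]; ring⟩, fun ⟨k, hk⟩ => ⟨k, by linarith⟩⟩

theorem odd_of_mem_Uset_two {i : ℕ} {d : ℤ} (hi : 1 ≤ i) (hd : d ∈ Uset 2 i) : Odd d := by
  obtain ⟨k, rfl⟩ := hd
  exact ⟨2 ^ (i - 1) * k, by rw [← pow_sub_one_mul (by omega)]; push_cast; ring⟩

theorem odd_or_four_dvd_pow_prime_pow_sub_one {p j : ℕ} (hp : p.Prime) {d : ℤ}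
    (hd : d ∈ Uset p 1) (h : 2 < p ∨ d ∈ Uset p 2 ∨ 0 < j) :
    Odd p ∨ (4 : ℤ) ∣ d ^ p ^ j - 1 := by
  rcases hp.eq_two_or_odd' with rfl | hodd
  · right
    rcases h with h | h | hj
    · omega
    · exact (mem_Uset_iff.mp h).trans (by simpa using sub_one_dvd_pow_sub_one d (2 ^ j))
    · obtain ⟨j, rfl⟩ := Nat.exists_eq_add_of_lt hj
      rw [pow_succ, pow_mul]
      exact (dvd_mul_right 4 2).trans
        (Int.eight_dvd_sq_sub_one_of_odd ((odd_of_mem_Uset_two le_rfl hd).pow))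
  · exact Or.inl hodd

theorem two_pow_add_dvd_geom_sum_sub_of_mem_negUset {d : ℤ} {v : ℕ} (hv : 1 ≤ v)
    (hd : d ∈ negUset 2 v) (hd' : d ∉ negUset 2 (v + 1)) (s : ℕ) :
    2 ^ (s + 1 + v) ∣ ∑ k ∈ range (2 ^ (s + 1)), d ^ k - 2 ^ (s + v) := by
  obtain ⟨k, hdk⟩ := hd
  have hodd : Odd d := by simpa using odd_of_mem_Uset_two hv ⟨k, hdk⟩
  obtain ⟨c, rfl⟩ : Odd k := by
    refine Int.not_even_iff_odd.mp fun ⟨c, hc⟩ => hd' ⟨c, ?_⟩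
    rw [hdk, hc]; push_cast; ring
  have h1d : 1 + d = -(2 ^ v * (2 * c + 1)) := by push_cast at hdk; linarith
  have hsum := two_pow_mul_dvd_geom_sum_sub_of_odd hodd s
  rw [h1d] at hsum
  have hsplit : ∑ k ∈ range (2 ^ (s + 1)), d ^ k - 2 ^ (s + v)
      = (∑ k ∈ range (2 ^ (s + 1)), d ^ k - 2 ^ s * -(2 ^ v * (2 * c + 1)))
        - 2 ^ (s + 1 + v) * (c + 1) := by ring
  have h2 : (2 : ℤ) ^ (s + 1 + v) ∣ 2 ^ (s + 1) * -(2 ^ v * (2 * c + 1)) :=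
    ⟨-(2 * c + 1), by ring⟩
  rw [hsplit]
  exact dvd_sub (h2.trans hsum) (dvd_mul_right _ _)

section Evaluation

variable {p n : ℕ} (d : ℤ)

theorem phiZ_sum {ι : Type*} (s : Finset ι) (f : ι → ZG p n) :
    phiZ p n d (∑ i ∈ s, f i) = ∑ i ∈ s, phiZ p n d (f i) := by
  simp only [phiZ, MonoidAlgebra.coeff_sum, Finsupp.finsetSum_apply, sum_mul]
  exact sum_comm

theorem sgZ_pow (m : ℕ) :
    sgZ p n ^ m = MonoidAlgebra.single (Multiplicative.ofAdd (m : ZMod (p ^ n))) 1 := by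
  simp [sgZ, MonoidAlgebra.of_apply, MonoidAlgebra.single_pow, ← ofAdd_nsmul]

theorem phiZ_sgZ_pow {m : ℕ} (hm : m < p ^ n) : phiZ p n d (sgZ p n ^ m) = d ^ m := by
  rw [phiZ, sgZ_pow, sum_eq_single_of_mem m (mem_range.mpr hm)]
  · simp
  · intro t ht htm
    rw [MonoidAlgebra.coeff_single, Finsupp.single_apply, if_neg, zero_mul]
    intro h
    have h := congrArg ZMod.val (Multiplicative.ofAdd.injective h)
    rw [ZMod.val_natCast_of_lt hm, ZMod.val_natCast_of_lt (mem_range.mp ht)] at h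
    exact htm h.symm

theorem phiZ_PelZ (hp : 0 < p) {i j : ℕ} (hji : j ≤ i) (hin : i ≤ n) :
    phiZ p n d (PelZ p n i j) = ∑ k ∈ range (p ^ (i - j)), (d ^ p ^ j) ^ k := by
  rw [PelZ, phiZ_sum]
  refine sum_congr rfl fun k hk => ?_
  have hk : k * p ^ j < p ^ n := calc
    k * p ^ j < p ^ (i - j) * p ^ j := by gcongr; exact mem_range.mp hk
    _ = p ^ i := by rw [← pow_add, Nat.sub_add_cancel hji]
    _ ≤ p ^ n := Nat.pow_le_pow_right hp hin
  rw [phiZ_sgZ_pow d hk, ← pow_mul, mul_comm]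

end Evaluation

theorem phi_P_general (p n : ℕ) (hp : p.Prime) (d : ℤ) (hd : d ∈ Uset p 1)
    (i j : ℕ) (hji : j ≤ i) (hin : i ≤ n) :
    ((p : ℤ) ^ (i - j) ∣ phiZ p n d (PelZ p n i j)) ∧
    ((2 < p ∨ d ∈ Uset p 2 ∨ 0 < j) → j < i →
      (p : ℤ) ^ (i - j + 1) ∣ (phiZ p n d (PelZ p n i j) - (p : ℤ) ^ (i - j))) ∧
    (p = 2 → d = -1 → j = 0 → 0 < i → phiZ p n d (PelZ p n i j) = 0) ∧
    (∀ v : ℕ, p = 2 → 2 ≤ v → d ∈ negUset p v → d ∉ negUset p (v + 1) → j = 0 → 0 < i →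
      (2 : ℤ) ^ (i + v) ∣ (phiZ p n d (PelZ p n i j) - 2 ^ (i + v - 1))) := by
  rw [phiZ_PelZ d hp.pos hji hin]
  have hcongr (h : 2 < p ∨ d ∈ Uset p 2 ∨ 0 < j) :=
    pow_succ_dvd_geom_sum_prime_pow_sub hp
      ((by simpa using mem_Uset_iff.mp hd : (p : ℤ) ∣ d - 1).trans (sub_one_dvd_pow_sub_one _ _))
      (odd_or_four_dvd_pow_prime_pow_sub_one hp hd h) (i - j)
  refine ⟨?_, fun h _ => hcongr h, ?_, ?_⟩
  · by_cases h : 2 < p ∨ d ∈ Uset p 2 ∨ 0 < j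
    · exact (dvd_sub_left (dvd_refl _)).mp ((pow_dvd_pow _ (i - j).le_succ).trans (hcongr h))
    · obtain ⟨rfl, rfl⟩ : p = 2 ∧ j = 0 := by
        have := hp.two_le
        constructor <;> omega
      simpa using two_pow_dvd_geom_sum_of_odd (odd_of_mem_Uset_two le_rfl hd) i
  · rintro rfl rfl rfl hi
    simp [neg_one_geom_sum, (Nat.even_pow' hi.ne').mpr even_two]
  · rintro v rfl hv hdv hdv' rfl hi
    obtain ⟨s, rfl⟩ := Nat.exists_eq_add_of_lt hi
    simpa [add_right_comm] using
      two_pow_add_dvd_geom_sum_sub_of_mem_negUset (by omega) hdv hdv' s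

/-- Lemma 2.3 (`le:phi`). -/
theorem phi_P (p n : ℕ) (hp : p.Prime) (hn : 1 ≤ n) (d : ℤ) (hd : d ∈ Uset p 1)
    (i j : ℕ) (hji : j ≤ i) (hin : i ≤ n) :
    ((p : ℤ) ^ (i - j) ∣ phiZ p n d (PelZ p n i j)) ∧
    ((2 < p ∨ d ∈ Uset p 2 ∨ 0 < j) → j < i →
      (p : ℤ) ^ (i - j + 1) ∣ (phiZ p n d (PelZ p n i j) - (p : ℤ) ^ (i - j))) ∧
    (p = 2 → d = -1 → j = 0 → 0 < i → phiZ p n d (PelZ p n i j) = 0) ∧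
    (∀ v : ℕ, p = 2 → 2 ≤ v → d ∈ negUset p v → d ∉ negUset p (v + 1) → j = 0 → 0 < i →
      (2 : ℤ) ^ (i + v) ∣ (phiZ p n d (PelZ p n i j) - 2 ^ (i + v - 1))) :=
  phi_P_general p n hp d hd i j hji hin
end

section
/- For m ∈ ℕ, 0 ≤ k ≤ m, and 0 ≤ j < i ≤ n, one has ⟨P(i,j)⟩ ∩ ⟨p^k⟩ = ⟨p^k P(i,j)⟩ as ideals in R_mG_i. -/
open scoped BigOperators

/-!
Let `H ≤ G_i` be the subgroup generated by `σ^{p^j}`, of order `p^{i-j}`, so that `P(i,j)` is the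
sum `N` of the elements of `H`. A multiple `x = fN` is fixed by `H`, so its coefficients are
constant on the cosets of `H`, and `x = Σ_t x(t) t N` for a transversal `t` of `H`. If moreover
`x = p^k b`, then `x(t) = p^k b(t)` and `x = p^k (Σ_t b(t) t) N`.
-/

open MonoidAlgebra

section Group

variable {R G : Type*} [Semiring R] [Group G] (H : Subgroup G) [Fintype H]

noncomputable def subgroupNorm : MonoidAlgebra R G := ∑ h : H, of R G h

variable {H}

lemma subgroupNorm_mul_of {h : G} (hh : h ∈ H) :
    subgroupNorm (R := R) H * of R G h = subgroupNorm H := by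
  simp only [subgroupNorm, Finset.sum_mul, ← map_mul]
  exact Fintype.sum_equiv (Equiv.mulRight ⟨h, hh⟩) _ _ fun _ => rfl

open Classical in
lemma coeff_of_mul_subgroupNorm (t g : G) :
    (of R G t * subgroupNorm H).coeff g = if (g : G ⧸ H) = t then 1 else 0 := by
  simp only [subgroupNorm, Finset.mul_sum, of_apply, single_mul_single, one_mul, coeff_sum,
    Finsupp.finsetSum_apply, coeff_single, Finsupp.single_apply]
  split_ifs with hq
  · have hmem : t⁻¹ * g ∈ H := QuotientGroup.eq.1 hq.symm
    rw [Fintype.sum_eq_single ⟨t⁻¹ * g, hmem⟩ fun h hh => if_neg ?_]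
    · simp
    · rintro rfl
      exact hh (by simp)
  · refine Finset.sum_eq_zero fun h _ => if_neg ?_
    rintro rfl
    exact hq (QuotientGroup.eq.2 (by simp))

lemma subgroupNorm_zpowers {x : G} (hx : IsOfFinOrder x) [Fintype (Subgroup.zpowers x)] :
    subgroupNorm (R := R) (Subgroup.zpowers x) =
      ∑ k ∈ Finset.range (orderOf x), of R G x ^ k := by
  rw [subgroupNorm, ← Fintype.sum_equiv (finEquivZPowers hx) _ _ fun _ => rfl,
    ← Fin.sum_univ_eq_sum_range]
  simp [finEquivZPowers_apply]

end Group

section CommGroup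

variable {R G : Type*} [CommSemiring R] [CommGroup G] {H : Subgroup G} [Fintype H]

lemma coeff_mul_right_eq_of_mem_span_subgroupNorm {x : MonoidAlgebra R G}
    (hx : x ∈ Ideal.span {subgroupNorm H}) (g : G) {h : G} (hh : h ∈ H) :
    x.coeff (g * h) = x.coeff g := by
  obtain ⟨f, rfl⟩ := Ideal.mem_span_singleton'.1 hx
  conv_lhs => rw [← subgroupNorm_mul_of hh, ← mul_assoc, of_apply, coeff_mul_single_apply]
  simp

lemma eq_sum_of_mem_span_subgroupNorm [Fintype (G ⧸ H)] {x : MonoidAlgebra R G}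
    (hx : x ∈ Ideal.span {subgroupNorm H}) :
    x = ∑ q : G ⧸ H, x.coeff q.out • (of R G q.out * subgroupNorm H) := by
  classical
  ext g
  simp only [coeff_sum, Finsupp.finsetSum_apply, coeff_smul_apply, coeff_of_mul_subgroupNorm,
    QuotientGroup.out_eq', smul_eq_mul, mul_ite, mul_one, mul_zero, Finset.sum_ite_eq,
    Finset.mem_univ, if_true]
  obtain ⟨h, hg⟩ := QuotientGroup.mk_out_eq_mul H g
  rw [hg, coeff_mul_right_eq_of_mem_span_subgroupNorm hx g h.2]

theorem span_subgroupNorm_inf_span_algebraMap [Finite (G ⧸ H)] (r : R) :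
    Ideal.span {subgroupNorm H} ⊓ Ideal.span {algebraMap R (MonoidAlgebra R G) r} =
      Ideal.span {algebraMap R (MonoidAlgebra R G) r * subgroupNorm H} := by
  have := Fintype.ofFinite (G ⧸ H)
  apply le_antisymm
  · rintro x ⟨hxN, hxr⟩
    obtain ⟨b, rfl⟩ := Ideal.mem_span_singleton'.1 hxr
    rw [eq_sum_of_mem_span_subgroupNorm hxN]
    refine Ideal.sum_mem _ fun q _ => ?_
    have hterm : (b * algebraMap R _ r).coeff q.out • (of R G q.out * subgroupNorm H) =
        (b.coeff q.out • of R G q.out) * (algebraMap R _ r * subgroupNorm H) := by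
      rw [mul_comm, ← Algebra.smul_def, coeff_smul_apply, smul_eq_mul]
      simp only [Algebra.smul_def, map_mul]
      ring
    exact hterm ▸ Ideal.mul_mem_left _ _ (Ideal.mem_span_singleton_self _)
  · rw [Ideal.span_le, Set.singleton_subset_iff]
    exact ⟨Ideal.mul_mem_left _ _ (Ideal.mem_span_singleton_self _),
      Ideal.mul_mem_right _ _ (Ideal.mem_span_singleton_self _)⟩

end CommGroup

lemma orderOf_ofAdd_one_pow {n d : ℕ} (hd : d ≠ 0) (hdn : d ∣ n) :
    orderOf (Multiplicative.ofAdd (1 : ZMod n) ^ d) = n / d := by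
  rw [orderOf_pow_of_dvd hd, orderOf_ofAdd_eq_addOrderOf, ZMod.addOrderOf_one]
  rwa [orderOf_ofAdd_eq_addOrderOf, ZMod.addOrderOf_one]

lemma pel_eq_subgroupNorm (p m i j : ℕ) (hp : 0 < p) (hji : j ≤ i)
    [Fintype (Subgroup.zpowers (Multiplicative.ofAdd (1 : ZMod (p ^ i)) ^ p ^ j))] :
    Pel p m i i j =
      subgroupNorm (Subgroup.zpowers (Multiplicative.ofAdd (1 : ZMod (p ^ i)) ^ p ^ j)) := by
  have : NeZero (p ^ i) := ⟨pow_ne_zero _ hp.ne'⟩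
  rw [subgroupNorm_zpowers (isOfFinOrder_of_finite _),
    orderOf_ofAdd_one_pow (pow_ne_zero _ hp.ne') (pow_dvd_pow p hji), Nat.pow_div hji hp, Pel]
  simp only [sg, map_pow, ← pow_mul, mul_comm]

theorem span_P_inter_span_pk_general (p m : ℕ) (hp : p.Prime)
    (k : ℕ) (i j : ℕ) (hji : j < i) :
    Ideal.span {Pel p m i i j} ⊓ Ideal.span {(p : RG p m i) ^ k} =
      Ideal.span {(p : RG p m i) ^ k * Pel p m i i j} := by
  have : NeZero (p ^ i) := ⟨pow_ne_zero _ hp.ne_zero⟩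
  have := Fintype.ofFinite (Subgroup.zpowers (Multiplicative.ofAdd (1 : ZMod (p ^ i)) ^ p ^ j))
  have hpk : (p : RG p m i) ^ k = algebraMap (Rm p m) (RG p m i) ((p : Rm p m) ^ k) := by
    rw [map_pow, map_natCast]
  rw [pel_eq_subgroupNorm p m i j hp.pos hji.le, hpk]
  exact span_subgroupNorm_inf_span_algebraMap _

/-- Lemma 2.4 (`le:separate`). -/
theorem span_P_inter_span_pk (p n m : ℕ) (hp : p.Prime) (hm : 1 ≤ m)
    (k : ℕ) (hk : k ≤ m) (i j : ℕ) (hji : j < i) (hin : i ≤ n) :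
    Ideal.span {Pel p m i i j} ⊓ Ideal.span {(p : RG p m i) ^ k} =
      Ideal.span {(p : RG p m i) ^ k * Pel p m i i j} :=
  span_P_inter_span_pk_general p m hp k i j hji
end

section
/- Suppose m ∈ ℕ, 0 ≤ i ≤ n, and d ∈ U_1. Then the annihilator of σ−d in R_mG_i equals the ideal ⟨p^k Q_d(i,0)⟩, where k = min{v ≥ 0 : p^v(d^{p^i}−1) ≡ 0 mod p^m}. -/
open scoped BigOperators

/-!
Write `N = p^i`. Comparing coefficients, `s (σ - d) = 0` says `s_{g σ⁻¹} = d s_g` for every `g`, so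
`s` is determined by its coefficient `t` at `σ⁻¹ = σ^{N-1}`: `s = t Q_d(i,0)`, and going once around
the cycle forces `t d^N = t`. Conversely `Q_d(i,0) (σ - d) = σ^N - d^N = 1 - d^N` is killed by `p^k`.
It remains to see that the annihilator of `d^N - 1` in `ℤ/p^m` is `p^k ℤ/p^m`: if `p^m ∣ a (d^N - 1)`,
then by Bézout also `p^m ∣ gcd(a, p^k) (d^N - 1)`, and `gcd(a, p^k)` is a power of `p`, which must be
`p^k` by the minimality of `k`.
-/

open MonoidAlgebra Finset

theorem Int.pow_dvd_of_dvd_mul_of_minimal {p m k : ℕ} (hp : p.Prime) {a C : ℤ}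
    (hk : (p : ℤ) ^ m ∣ (p : ℤ) ^ k * C) (hkmin : ∀ v < k, ¬ (p : ℤ) ^ m ∣ (p : ℤ) ^ v * C)
    (ha : (p : ℤ) ^ m ∣ a * C) : (p : ℤ) ^ k ∣ a := by
  obtain ⟨j, hjk, hj⟩ := (Nat.dvd_prime_pow hp).1
    ((Int.gcd_dvd_natAbs_right a ((p : ℤ) ^ k)).trans (by simp [Int.natAbs_pow]) :
      a.gcd (p ^ k) ∣ p ^ k)
  have hgcd : (p : ℤ) ^ m ∣ (p : ℤ) ^ j * C := by
    have bezout := Int.gcd_eq_gcd_ab a ((p : ℤ) ^ k)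
    rw [hj] at bezout
    push_cast at bezout
    rw [bezout, add_mul, mul_right_comm, mul_right_comm _ (Int.gcdB _ _)]
    exact dvd_add (ha.mul_right _) (hk.mul_right _)
  obtain rfl : j = k := hjk.eq_or_lt.resolve_right fun hj => hkmin j hj hgcd
  have hgcd_dvd := Int.gcd_dvd_left a ((p : ℤ) ^ j)
  rw [hj] at hgcd_dvd
  exact_mod_cast hgcd_dvd

theorem ZMod.exists_eq_pow_mul_of_mul_intCast_eq_zero {p m k : ℕ} (hp : p.Prime) {C : ℤ}
    (hk : (p : ℤ) ^ m ∣ (p : ℤ) ^ k * C) (hkmin : ∀ v < k, ¬ (p : ℤ) ^ m ∣ (p : ℤ) ^ v * C)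
    {t : ZMod (p ^ m)} (ht : t * C = 0) : ∃ u : ZMod (p ^ m), t = p ^ k * u := by
  have ha : (p : ℤ) ^ m ∣ (t.cast : ℤ) * C := by
    exact_mod_cast (ZMod.intCast_zmod_eq_zero_iff_dvd _ (p ^ m)).1 (by simpa using ht)
  obtain ⟨b, hb⟩ := Int.pow_dvd_of_dvd_mul_of_minimal hp hk hkmin ha
  refine ⟨b, ?_⟩
  rw [← ZMod.intCast_zmod_cast t, hb]
  push_cast
  rfl

namespace MonoidAlgebra

variable {R : Type*} [CommRing R]

theorem coeff_mul_inv_pow_of_mul_sub_eq_zero {G : Type*} [Group G] {s : R[G]} {g : G}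
    {d : R} (hs : s * (of R G g - algebraMap R R[G] d) = 0) (h : G) (j : ℕ) :
    s.coeff (h * (g ^ j)⁻¹) = s.coeff h * d ^ j := by
  have step : ∀ h, s.coeff (h * g⁻¹) = s.coeff h * d := fun h => by
    simpa [mul_sub, sub_eq_zero, of_apply, Algebra.algebraMap_eq_smul_one, coeff_mul_single_one,
      mul_comm d] using congrArg (coeff · h) hs
  induction j generalizing h with
  | zero => simp
  | succ j ih => rw [pow_succ', mul_inv_rev, ← mul_assoc, step, ih, pow_succ, mul_assoc]

variable {N : ℕ}

theorem of_ofAdd_one_pow (k : ℕ) :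
    of R (Multiplicative (ZMod N)) (.ofAdd 1) ^ k = single (.ofAdd (k : ZMod N)) 1 := by
  rw [← map_pow, ← ofAdd_nsmul, nsmul_one, of_apply]

theorem of_ofAdd_one_pow_self : of R (Multiplicative (ZMod N)) (.ofAdd 1) ^ N = 1 := by
  rw [of_ofAdd_one_pow, ZMod.natCast_self]
  rfl

theorem eq_sum_range_single_coeff [NeZero N] (s : R[Multiplicative (ZMod N)]) :
    s = ∑ k ∈ range N, single (.ofAdd (k : ZMod N)) (s.coeff (.ofAdd k)) := by
  conv_lhs => rw [← sum_coeff_single s]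
  rw [Finsupp.sum_fintype _ _ (by simp)]
  exact sum_nbij' (fun g => g.toAdd.val) (fun k => .ofAdd (k : ZMod N)) (by simp [ZMod.val_lt])
    (by simp) (by simp) (by simp +contextual [Nat.mod_eq_of_lt]) (by simp)

theorem exists_eq_mul_geom_sum_of_mul_sub_eq_zero [NeZero N] {s : R[Multiplicative (ZMod N)]}
    {d : R} (hs : s * (of R _ (.ofAdd 1) - algebraMap R _ d) = 0) :
    ∃ t : R, t * (d ^ N - 1) = 0 ∧ s = algebraMap R _ t *
      ∑ k ∈ range N, of R _ (.ofAdd 1) ^ k * algebraMap R _ d ^ (N - 1 - k) := by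
  set t := s.coeff (.ofAdd (-1))
  have hcoeff : ∀ k < N, s.coeff (.ofAdd (k : ZMod N)) = t * d ^ (N - 1 - k) := fun k hk => by
    rw [← coeff_mul_inv_pow_of_mul_sub_eq_zero hs]
    congr 1
    rw [← ofAdd_nsmul, ← ofAdd_neg, ← ofAdd_add, nsmul_one, Nat.cast_sub (by omega),
      Nat.cast_sub (by omega), ZMod.natCast_self]
    ring_nf
  refine ⟨t, ?_, ?_⟩
  · have hcycle := coeff_mul_inv_pow_of_mul_sub_eq_zero hs (.ofAdd (-1)) N
    rw [← ofAdd_nsmul, nsmul_one, ZMod.natCast_self, ofAdd_zero, inv_one, mul_one] at hcycle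
    linear_combination -hcycle
  · rw [eq_sum_range_single_coeff s, mul_sum]
    refine sum_congr rfl fun k hk => ?_
    rw [hcoeff k (mem_range.1 hk), of_ofAdd_one_pow, ← map_pow]
    simp [Algebra.algebraMap_eq_smul_one]

end MonoidAlgebra

theorem ann_sigma_sub_d_general (p m : ℕ) (hp : p.Prime) (i : ℕ)
    (d : ℤ) (k : ℕ)
    (hk : (p : ℤ) ^ m ∣ (p : ℤ) ^ k * (d ^ p ^ i - 1))
    (hkmin : ∀ v : ℕ, v < k → ¬ (p : ℤ) ^ m ∣ (p : ℤ) ^ v * (d ^ p ^ i - 1)) :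
    {s : RG p m i | s * (sg p m i - (d : RG p m i)) = 0} =
      ↑(Ideal.span {(p : RG p m i) ^ k * Qel p m i d i 0}) := by
  have : NeZero (p ^ i) := ⟨pow_ne_zero i hp.ne_zero⟩
  have hdC : (d : RG p m i) = algebraMap (Rm p m) _ d := (map_intCast _ d).symm
  have hQ : Qel p m i d i 0 = ∑ j ∈ range (p ^ i),
      of (Rm p m) (Cyc p i) (.ofAdd 1) ^ j * algebraMap (Rm p m) _ d ^ (p ^ i - 1 - j) := by
    simp only [Qel, sg, hdC, pow_zero, pow_one, one_mul, Nat.sub_zero]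
    exact sum_congr rfl fun j _ => mul_comm _ _
  have hker : algebraMap (Rm p m) (RG p m i) ((p : ℤ) ^ k * (d ^ p ^ i - 1) : ℤ) = 0 := by
    rw [(ZMod.intCast_zmod_eq_zero_iff_dvd _ (p ^ m)).2 (by exact_mod_cast hk), map_zero]
  ext s
  rw [Set.mem_ofPred_eq, SetLike.mem_coe, hQ, sg, hdC]
  constructor
  · intro hs
    obtain ⟨t, ht, rfl⟩ := exists_eq_mul_geom_sum_of_mul_sub_eq_zero hs
    obtain ⟨u, rfl⟩ := ZMod.exists_eq_pow_mul_of_mul_intCast_eq_zero hp hk hkmin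
      (by exact_mod_cast ht)
    refine Ideal.mem_span_singleton'.2 ⟨algebraMap _ _ u, ?_⟩
    rw [map_mul, map_pow, map_natCast]
    ring
  · intro hs
    obtain ⟨r, rfl⟩ := Ideal.mem_span_singleton'.1 hs
    rw [mul_assoc, mul_assoc, geom_sum₂_mul, of_ofAdd_one_pow_self]
    push_cast at hker
    linear_combination -r * hker

/-- Lemma 2.6 (`le:phidb`). -/
theorem ann_sigma_sub_d (p n m : ℕ) (hp : p.Prime) (hm : 1 ≤ m) (i : ℕ) (hin : i ≤ n)
    (d : ℤ) (hd : d ∈ Uset p 1) (k : ℕ)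
    (hk : (p : ℤ) ^ m ∣ (p : ℤ) ^ k * (d ^ p ^ i - 1))
    (hkmin : ∀ v : ℕ, v < k → ¬ (p : ℤ) ^ m ∣ (p : ℤ) ^ v * (d ^ p ^ i - 1)) :
    {s : RG p m i | s * (sg p m i - (d : RG p m i)) = 0} =
      ↑(Ideal.span {(p : RG p m i) ^ k * Qel p m i d i 0}) :=
  ann_sigma_sub_d_general p m hp i d k hk hkmin
end

section
/- Suppose m ∈ ℕ, 0 ≤ i ≤ n, and t ∈ ℕ ∪ {0}. Let (b_j)_{j=0}^t be a decreasing sequence of elements of {0,…,m−1} and (c_j)_{j=0}^t an increasing sequence of elements of {−∞,0,…,i−1}. If c_0 = −∞, then ann_{R_mG_i}⟨p^{b_0}, {p^{b_j}(σ^{p^{c_j}}−1)}_{j=1}^t⟩ equals ⟨p^{m−b_0}⟩ when t = 0, and equals ⟨p^{m−b_0}P(i,c_1),…,p^{m−b_{t−1}}P(i,c_t), p^{m−b_t}⟩ when t > 0. If c_0 ≠ −∞, then ann_{R_mG_i}⟨{p^{b_j}(σ^{p^{c_j}}−1)}_{j=0}^t⟩ equals ⟨P(i,c_0), p^{m−b_0}⟩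 when t = 0, and equals ⟨P(i,c_0), p^{m−b_0}P(i,c_1),…,p^{m−b_{t−1}}P(i,c_t), p^{m−b_t}⟩ when t > 0. -/
open scoped BigOperators

/-!
Write `K(e, c)` for the ideal of those `f` with `f (σ^{p^c} - 1) ∈ p^e R_mG_i` (with
`σ^{p^{-∞}} = 0`, so `K(e, -∞) = ⟨p^e⟩`). Since the annihilator of `p^b` in `R_mG_i` is
`⟨p^{m-b}⟩`, the annihilator of `p^b (σ^{p^c} - 1)` is `K(m - b, c)`, and the left-hand sides are
`⋂_{j ≤ t} K(m - b_j, c_j)`.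

The key identity is `⟨p^α P(i,c), p^e⟩ = ⟨p^α⟩ ∩ K(e, c)` for `α ≤ e`. If `f = p^α w` lies on
the right, then modulo `p^e` its coefficients are constant on the cosets of `⟨σ^{p^c}⟩`, so `f` is
congruent to `p^α P(i,c) w₀`, where `w₀` keeps the coefficients of `w` on the transversal
`{σ^r : r < p^c}`. Induction on `t` then adds one generator at a time: the generators
`p^{m-b_j} P(i,c_{j+1})`, `j < t`, are killed by `σ^{p^{c_{t+1}}} - 1`, so by the modular law
intersecting with `K(m - b_{t+1}, c_{t+1})` only replaces `p^{m-b_t}` by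
`⟨p^{m-b_t} P(i,c_{t+1}), p^{m-b_{t+1}}⟩`. The case `c_0 ≠ -∞` is the case `c_0 = -∞` for the
sequences with `b_{-1} = m`, `c_{-1} = -∞` prepended, which make `P(i,c_0)` the generator
`p^{m-b_{-1}} P(i,c_0)`.
-/

open MonoidAlgebra Multiplicative

lemma dvd_apply_pow_mul_sub {R G : Type*} [Ring R] [Monoid G] {a : R} {f : G → R} {τ : G}
    (h : ∀ g, a ∣ f (τ * g) - f g) (s : ℕ) (g : G) : a ∣ f (τ ^ s * g) - f g := by
  induction s with
  | zero => simp
  | succ s ih => simpa [pow_succ', mul_assoc] using dvd_add (h (τ ^ s * g)) ih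

lemma ZMod.natCast_pow_dvd_iff_mul_eq_zero {p m e : ℕ} (hp : p ≠ 0) (he : e ≤ m)
    (x : ZMod (p ^ m)) :
    (p : ZMod (p ^ m)) ^ e ∣ x ↔ (p : ZMod (p ^ m)) ^ (m - e) * x = 0 := by
  have : NeZero (p ^ m) := ⟨pow_ne_zero m hp⟩
  refine ⟨fun ⟨y, hy⟩ => ?_, fun h => ?_⟩
  · rw [hy, ← mul_assoc, ← pow_add, Nat.sub_add_cancel he, ← Nat.cast_pow, ZMod.natCast_self,
      zero_mul]
  · rw [← ZMod.natCast_zmod_val x, ← Nat.cast_pow, ← Nat.cast_mul,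
      ZMod.natCast_eq_zero_iff] at h
    have h' : p ^ (m - e) * p ^ e ∣ p ^ (m - e) * x.val := by
      rwa [← pow_add, Nat.sub_add_cancel he]
    obtain ⟨y, hy⟩ := (Nat.mul_dvd_mul_iff_left (pow_pos (Nat.pos_of_ne_zero hp) _)).mp h'
    exact ⟨y, by rw [← ZMod.natCast_zmod_val x, hy]; push_cast; rfl⟩

lemma ZMod.val_sub_natCast_mul_lt_iff {p i c : ℕ} (hp : p ≠ 0) (hc : c ≤ i) (x : ZMod (p ^ i))
    {k : ℕ} (hk : k < p ^ (i - c)) :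
    (x - ((k * p ^ c : ℕ) : ZMod (p ^ i))).val < p ^ c ↔ k = x.val / p ^ c := by
  have : NeZero (p ^ i) := ⟨pow_ne_zero i hp⟩
  have hpc : 0 < p ^ c := pow_pos (Nat.pos_of_ne_zero hp) c
  constructor
  · intro h
    set y := x - ((k * p ^ c : ℕ) : ZMod (p ^ i)) with hy
    have hyk : y.val + k * p ^ c < p ^ i :=
      calc y.val + k * p ^ c < (k + 1) * p ^ c := by rw [add_mul, one_mul, add_comm]; omega
        _ ≤ p ^ (i - c) * p ^ c := Nat.mul_le_mul_right _ hk
        _ = p ^ i := by rw [← pow_add, Nat.sub_add_cancel hc]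
    have hx : x.val = y.val + k * p ^ c := by
      rw [← ZMod.val_natCast_of_lt hyk, Nat.cast_add, ZMod.natCast_zmod_val, hy, sub_add_cancel]
    rw [hx, Nat.add_mul_div_right _ _ hpc, Nat.div_eq_of_lt h, zero_add]
  · rintro rfl
    have hx : x - ((x.val / p ^ c * p ^ c : ℕ) : ZMod (p ^ i)) =
        ((x.val % p ^ c : ℕ) : ZMod (p ^ i)) := by
      rw [sub_eq_iff_eq_add, ← Nat.cast_add, Nat.mod_add_div', ZMod.natCast_zmod_val]
    rw [hx, ZMod.val_natCast]
    exact (Nat.mod_le _ _).trans_lt (Nat.mod_lt _ hpc)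

lemma exists_natCast_eq_of_ne_bot {x : WithBot ℕ} (hx : x ≠ ⊥) : ∃ k : ℕ, x = k := by
  obtain ⟨k, rfl⟩ := WithBot.ne_bot_iff_exists.mp hx
  exact ⟨k, rfl⟩

def cycGenPow (p i c : ℕ) : Cyc p i := ofAdd ((p ^ c : ℕ) : ZMod (p ^ i))

section

variable {p m i : ℕ}

lemma sg_pow (k : ℕ) : sg p m i ^ k = single (ofAdd (k : ZMod (p ^ i))) 1 := by
  rw [sg, of_apply, single_pow, one_pow, ← ofAdd_nsmul, nsmul_eq_mul, mul_one]

lemma cycGenPow_pow (c k : ℕ) :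
    cycGenPow p i c ^ k = ofAdd ((k * p ^ c : ℕ) : ZMod (p ^ i)) := by
  rw [cycGenPow, ← ofAdd_nsmul, nsmul_eq_mul, Nat.cast_mul]

lemma sg_pow_mul_pow (c k : ℕ) : sg p m i ^ (k * p ^ c) = single (cycGenPow p i c ^ k) 1 := by
  rw [sg_pow, cycGenPow_pow]

lemma sg_pow_pow (c : ℕ) : sg p m i ^ p ^ c = single (cycGenPow p i c) 1 := by
  simpa using sg_pow_mul_pow (p := p) (m := m) (i := i) c 1

lemma sg_pow_pow_self : sg p m i ^ p ^ i = 1 := by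
  rw [sg_pow, ZMod.natCast_self, ofAdd_zero, one_def]

lemma sigmaPow_coe (k : ℕ) : sigmaPow p m i k = sg p m i ^ p ^ k := rfl

lemma PelW_coe (k : ℕ) : PelW p m i i k = Pel p m i i k := rfl

lemma Pel_eq_geom_sum (c : ℕ) :
    Pel p m i i c = ∑ k ∈ Finset.range (p ^ (i - c)), (sg p m i ^ p ^ c) ^ k := by
  simp only [Pel, ← pow_mul, mul_comm]

lemma Pel_mul_sg_pow_sub_one {c c' : ℕ} (hcc' : c ≤ c') (hc' : c' ≤ i) :
    Pel p m i i c * (sg p m i ^ p ^ c' - 1) = 0 := by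
  obtain ⟨z, hz⟩ : sg p m i ^ p ^ c - 1 ∣ sg p m i ^ p ^ c' - 1 := by
    simpa [← pow_mul, ← pow_add, Nat.add_sub_cancel' hcc'] using
      sub_dvd_pow_sub_pow (sg p m i ^ p ^ c) 1 (p ^ (c' - c))
  rw [hz, ← mul_assoc, Pel_eq_geom_sum, geom_sum_mul, ← pow_mul, ← pow_add,
    Nat.add_sub_cancel' (hcc'.trans hc'), sg_pow_pow_self, sub_self, zero_mul]

lemma coeff_natCast_pow_mul (e : ℕ) (f : RG p m i) (g : Cyc p i) :
    ((p : RG p m i) ^ e * f).coeff g = (p : Rm p m) ^ e * f.coeff g := by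
  rw [← Nat.cast_pow, ← nsmul_eq_mul, coeff_smul_apply, nsmul_eq_mul, Nat.cast_pow]

lemma mem_span_natCast_pow_iff (hp : p ≠ 0) {e : ℕ} {f : RG p m i} :
    f ∈ Ideal.span {(p : RG p m i) ^ e} ↔ ∀ g, (p : Rm p m) ^ e ∣ f.coeff g := by
  have : NeZero (p ^ i) := ⟨pow_ne_zero i hp⟩
  rw [Ideal.mem_span_singleton]
  refine ⟨fun ⟨y, hy⟩ g => ⟨y.coeff g, by rw [hy, coeff_natCast_pow_mul]⟩, fun hf => ?_⟩
  choose y hy using hf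
  exact ⟨ofCoeff (Finsupp.equivFunOnFinite.symm y), by ext g; simp [coeff_natCast_pow_mul, hy]⟩

lemma natCast_pow_mul_eq_zero_iff (hp : p ≠ 0) {b : ℕ} (hb : b ≤ m) (x : RG p m i) :
    (p : RG p m i) ^ b * x = 0 ↔ x ∈ Ideal.span {(p : RG p m i) ^ (m - b)} := by
  rw [mem_span_natCast_pow_iff hp, ← coeff_eq_zero, Finsupp.ext_iff]
  simp only [coeff_natCast_pow_mul, Finsupp.coe_zero, Pi.zero_apply,
    ZMod.natCast_pow_dvd_iff_mul_eq_zero hp (Nat.sub_le m b), Nat.sub_sub_self hb]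

noncomputable def fixModIdeal (p m i e : ℕ) (c : WithBot ℕ) : Ideal (RG p m i) :=
  (Ideal.span {(p : RG p m i) ^ e}).colon {sigmaPow p m i c - 1}

lemma mem_fixModIdeal {e : ℕ} {c : WithBot ℕ} {f : RG p m i} :
    f ∈ fixModIdeal p m i e c ↔ f * (sigmaPow p m i c - 1) ∈ Ideal.span {(p : RG p m i) ^ e} :=
  Submodule.mem_colon_singleton

lemma fixModIdeal_bot (e : ℕ) : fixModIdeal p m i e ⊥ = Ideal.span {(p : RG p m i) ^ e} := by
  ext f
  rw [mem_fixModIdeal, sigmaPow, WithBot.recBotCoe_bot, zero_sub, mul_neg_one, Ideal.neg_mem_iff]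

lemma mem_fixModIdeal_coe_iff (hp : p ≠ 0) {e c : ℕ} {f : RG p m i} :
    f ∈ fixModIdeal p m i e c ↔
      ∀ g, (p : Rm p m) ^ e ∣ f.coeff (cycGenPow p i c * g) - f.coeff g := by
  rw [mem_fixModIdeal, mem_span_natCast_pow_iff hp,
    (mul_left_surjective (cycGenPow p i c)).forall]
  simp only [sigmaPow_coe, sg_pow_pow, mul_sub, mul_one, coeff_sub, Finsupp.sub_apply,
    coeff_mul_single_apply, mul_inv_cancel_comm, dvd_sub_comm]

lemma mul_eq_zero_iff_mem_fixModIdeal (hp : p ≠ 0) {b : ℕ} (hb : b ≤ m) (c : WithBot ℕ)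
    (r : RG p m i) :
    r * ((p : RG p m i) ^ b * (sigmaPow p m i c - 1)) = 0 ↔ r ∈ fixModIdeal p m i (m - b) c := by
  rw [mul_left_comm, natCast_pow_mul_eq_zero_iff hp hb, mem_fixModIdeal]

noncomputable def truncate (c : ℕ) (w : RG p m i) : RG p m i :=
  ofCoeff (w.coeff.filter fun g => (toAdd g).val < p ^ c)

lemma coeff_Pel_mul_truncate (hp : p ≠ 0) {c : ℕ} (hc : c ≤ i) (w : RG p m i) (g : Cyc p i) :
    (Pel p m i i c * truncate c w).coeff g =
      w.coeff ((cycGenPow p i c ^ ((toAdd g).val / p ^ c))⁻¹ * g) := by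
  have : NeZero (p ^ i) := ⟨pow_ne_zero i hp⟩
  have hmem : (toAdd g).val / p ^ c ∈ Finset.range (p ^ (i - c)) := by
    rw [Finset.mem_range, Nat.div_lt_iff_lt_mul (pow_pos (Nat.pos_of_ne_zero hp) c), ← pow_add,
      Nat.sub_add_cancel hc]
    exact ZMod.val_lt _
  have hcond : ∀ k ∈ Finset.range (p ^ (i - c)),
      (toAdd ((cycGenPow p i c ^ k)⁻¹ * g)).val < p ^ c ↔ k = (toAdd g).val / p ^ c := by
    intro k hk
    rw [cycGenPow_pow, toAdd_mul, toAdd_inv, toAdd_ofAdd, neg_add_eq_sub]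
    exact ZMod.val_sub_natCast_mul_lt_iff hp hc _ (Finset.mem_range.mp hk)
  simp only [Pel, sg_pow_mul_pow, Finset.sum_mul, coeff_sum, Finsupp.finsetSum_apply,
    coeff_single_mul_apply, one_mul, truncate, Finsupp.filter_apply]
  rw [Finset.sum_congr rfl fun k hk => if_congr (hcond k hk) rfl rfl, Finset.sum_ite_eq',
    if_pos hmem]

theorem span_natCast_pow_mul_Pel_pair (hp : p ≠ 0) {α e c : ℕ} (hαe : α ≤ e) (hc : c ≤ i) :
    Ideal.span {(p : RG p m i) ^ α * Pel p m i i c, (p : RG p m i) ^ e} =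
      Ideal.span {(p : RG p m i) ^ α} ⊓ fixModIdeal p m i e c := by
  refine le_antisymm (Ideal.span_le.mpr ?_) fun f ⟨hfα, hfe⟩ => ?_
  · rintro _ (rfl | rfl)
    · refine ⟨Ideal.mul_mem_right _ _ (Ideal.mem_span_singleton_self _), mem_fixModIdeal.mpr ?_⟩
      rw [sigmaPow_coe, mul_assoc, Pel_mul_sg_pow_sub_one le_rfl hc, mul_zero]
      exact zero_mem _
    · exact ⟨Ideal.mem_span_singleton.mpr (pow_dvd_pow _ hαe),
        mem_fixModIdeal.mpr (Ideal.mul_mem_right _ _ (Ideal.mem_span_singleton_self _))⟩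
  · obtain ⟨w, rfl⟩ := Ideal.mem_span_singleton.mp hfα
    replace hfe := (mem_fixModIdeal_coe_iff hp).mp hfe
    have hrest : (p : RG p m i) ^ α * w - (p : RG p m i) ^ α * Pel p m i i c * truncate c w ∈
        Ideal.span {(p : RG p m i) ^ e} := by
      refine (mem_span_natCast_pow_iff hp).mpr fun g => ?_
      set s := (toAdd g).val / p ^ c
      simp only [coeff_sub, Finsupp.sub_apply, mul_assoc, coeff_natCast_pow_mul,
        coeff_Pel_mul_truncate hp hc]
      rw [← coeff_natCast_pow_mul, ← coeff_natCast_pow_mul]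
      simpa using dvd_apply_pow_mul_sub hfe s ((cycGenPow p i c ^ s)⁻¹ * g)
    rw [← sub_add_cancel ((p : RG p m i) ^ α * w) (_ * truncate c w)]
    exact Ideal.add_mem _ (Ideal.span_mono (by simp) hrest)
      (Ideal.mul_mem_right _ _ (Ideal.subset_span (by simp)))

def normGens (p m i : ℕ) (b : ℕ → ℕ) (c : ℕ → WithBot ℕ) (t : ℕ) : Set (RG p m i) :=
  {x | ∃ j < t, x = (p : RG p m i) ^ (m - b j) * PelW p m i i (c (j + 1))}

lemma normGens_succ (b : ℕ → ℕ) (c : ℕ → WithBot ℕ) (t : ℕ) :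
    normGens p m i b c (t + 1) =
      insert ((p : RG p m i) ^ (m - b t) * PelW p m i i (c (t + 1))) (normGens p m i b c t) := by
  ext x
  simp only [normGens, Nat.exists_lt_succ_right, Set.mem_ofPred_eq, Set.mem_insert_iff]
  exact or_comm

lemma span_normGens_le_fixModIdeal {b : ℕ → ℕ} {c : ℕ → WithBot ℕ} {t k : ℕ}
    (hcmono : StrictMonoOn c (Set.Iic (t + 1))) (hk : c (t + 1) = k) (hki : k ≤ i) (e : ℕ) :
    Ideal.span (normGens p m i b c t) ≤ fixModIdeal p m i e k := by
  rw [Ideal.span_le]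
  rintro _ ⟨j, hj, rfl⟩
  obtain ⟨k', hk'⟩ := exists_natCast_eq_of_ne_bot
    (ne_bot_of_gt (hcmono (Set.mem_Iic.mpr (Nat.zero_le _)) (Set.mem_Iic.mpr (by omega))
      (by omega : 0 < j + 1)))
  have hk'k : (k' : WithBot ℕ) ≤ k := by
    rw [← hk', ← hk]
    exact hcmono.monotoneOn (Set.mem_Iic.mpr (by omega)) (Set.mem_Iic.mpr le_rfl) (by omega)
  rw [SetLike.mem_coe, mem_fixModIdeal, hk', sigmaPow_coe, PelW_coe, mul_assoc,
    Pel_mul_sg_pow_sub_one (by exact_mod_cast hk'k) hki, mul_zero]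
  exact zero_mem _

lemma span_normGens_union_succ (hp : p ≠ 0) {b : ℕ → ℕ} {c : ℕ → WithBot ℕ} {t : ℕ}
    (hb : b (t + 1) ≤ b t) (hci : c (t + 1) ≤ i) (hcmono : StrictMonoOn c (Set.Iic (t + 1))) :
    Ideal.span (normGens p m i b c (t + 1) ∪ {(p : RG p m i) ^ (m - b (t + 1))}) =
      Ideal.span (normGens p m i b c t ∪ {(p : RG p m i) ^ (m - b t)}) ⊓
        fixModIdeal p m i (m - b (t + 1)) (c (t + 1)) := by
  obtain ⟨k, hk⟩ := exists_natCast_eq_of_ne_bot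
    (ne_bot_of_gt (hcmono (Set.mem_Iic.mpr (Nat.zero_le _)) (Set.mem_Iic.mpr le_rfl) t.succ_pos))
  have hki : k ≤ i := by rw [hk] at hci; exact_mod_cast hci
  rw [normGens_succ, Set.insert_union, ← Set.union_insert, Ideal.span_union, Ideal.span_union,
    hk, PelW_coe, span_natCast_pow_mul_Pel_pair hp (Nat.sub_le_sub_left hb m) hki,
    ← sup_inf_assoc_of_le _ (span_normGens_le_fixModIdeal hcmono hk hki _)]

theorem mem_span_normGens_union_iff (hp : p ≠ 0) {b : ℕ → ℕ} {c : ℕ → WithBot ℕ} {t : ℕ}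
    (hbanti : AntitoneOn b (Set.Iic t)) (hc : ∀ j ≤ t, c j ≤ i)
    (hcmono : StrictMonoOn c (Set.Iic t)) (hc0 : c 0 = ⊥) (f : RG p m i) :
    f ∈ Ideal.span (normGens p m i b c t ∪ {(p : RG p m i) ^ (m - b t)}) ↔
      ∀ j ≤ t, f ∈ fixModIdeal p m i (m - b j) (c j) := by
  induction t with
  | zero => simp [normGens, hc0, fixModIdeal_bot]
  | succ t ih =>
    have hsub : Set.Iic t ⊆ Set.Iic (t + 1) := Set.Iic_subset_Iic.mpr t.le_succ
    rw [span_normGens_union_succ hp (hbanti (by simp) (by simp) t.le_succ) (hc _ le_rfl) hcmono,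
      Submodule.mem_inf, ih (hbanti.mono hsub) (fun j hj => hc j (hj.trans t.le_succ))
        (hcmono.mono hsub)]
    simp only [Nat.le_succ_iff, or_imp, forall_and, forall_eq]

theorem mem_span_insert_PelW_normGens_union_iff (hp : p ≠ 0) {b : ℕ → ℕ} {c : ℕ → WithBot ℕ}
    {t : ℕ} (hb : ∀ j ≤ t, b j ≤ m) (hbanti : AntitoneOn b (Set.Iic t)) (hc : ∀ j ≤ t, c j ≤ i)
    (hcmono : StrictMonoOn c (Set.Iic t)) (hc0 : c 0 ≠ ⊥) (f : RG p m i) :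
    f ∈ Ideal.span (insert (PelW p m i i (c 0))
        (normGens p m i b c t ∪ {(p : RG p m i) ^ (m - b t)})) ↔
      ∀ j ≤ t, f ∈ fixModIdeal p m i (m - b j) (c j) := by
  let b' : ℕ → ℕ := fun | 0 => m | j + 1 => b j
  let c' : ℕ → WithBot ℕ := fun | 0 => ⊥ | j + 1 => c j
  have hgens :
      normGens p m i b' c' (t + 1) = insert (PelW p m i i (c 0)) (normGens p m i b c t) := by
    ext x
    simp only [normGens, Set.mem_ofPred_eq, Set.mem_insert_iff]
    rw [Nat.exists_lt_succ_left]
    change (x = (p : RG p m i) ^ (m - m) * PelW p m i i (c 0) ∨ _) ↔ _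
    rw [Nat.sub_self, pow_zero, one_mul]
  have hbanti' : AntitoneOn b' (Set.Iic (t + 1)) := by
    rintro (_ | j) hj (_ | k) hk hjk <;> simp only [Set.mem_Iic] at hj hk
    · exact le_rfl
    · exact hb k (by omega)
    · omega
    · exact hbanti (Set.mem_Iic.mpr (by omega)) (Set.mem_Iic.mpr (by omega)) (by omega)
  have hc' : ∀ j ≤ t + 1, c' j ≤ i := by
    rintro (_ | j) hj
    · exact bot_le
    · exact hc j (by omega)
  have hcmono' : StrictMonoOn c' (Set.Iic (t + 1)) := by
    rintro (_ | j) hj (_ | k) hk hjk <;> simp only [Set.mem_Iic] at hj hk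
    · omega
    · exact (bot_lt_iff_ne_bot.mpr hc0).trans_le
        (hcmono.monotoneOn (by simp) (Set.mem_Iic.mpr (by omega)) (Nat.zero_le k))
    · omega
    · exact hcmono (Set.mem_Iic.mpr (by omega)) (Set.mem_Iic.mpr (by omega)) (by omega)
  rw [← Set.insert_union, ← hgens, mem_span_normGens_union_iff hp hbanti' hc' hcmono' rfl]
  refine ⟨fun h j hj => h (j + 1) (by omega), fun h j hj => ?_⟩
  rcases j with _ | j
  · change f ∈ fixModIdeal p m i (m - m) ⊥
    rw [Nat.sub_self, fixModIdeal_bot, pow_zero, Ideal.span_singleton_one]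
    exact Submodule.mem_top
  · exact h j (by omega)

lemma mem_annihilator_span_gens_iff (hp : p ≠ 0) {b : ℕ → ℕ} {c : ℕ → WithBot ℕ} {t : ℕ}
    (hb : ∀ j ≤ t, b j ≤ m) (r : RG p m i) :
    r ∈ (Ideal.span {x : RG p m i | ∃ j ≤ t,
        x = (p : RG p m i) ^ b j * (sigmaPow p m i (c j) - 1)}).annihilator ↔
      ∀ j ≤ t, r ∈ fixModIdeal p m i (m - b j) (c j) := by
  simp only [Submodule.mem_annihilator_span, Subtype.forall, Set.mem_ofPred_eq, smul_eq_mul,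
    forall_exists_index, and_imp]
  refine ⟨fun h j hj => ?_, fun h _ j hj hx => ?_⟩
  · exact (mul_eq_zero_iff_mem_fixModIdeal hp (hb j hj) _ r).mp (h _ j hj rfl)
  · exact hx ▸ (mul_eq_zero_iff_mem_fixModIdeal hp (hb j hj) _ r).mpr (h j hj)

lemma span_gens_eq_of_bot {b : ℕ → ℕ} {c : ℕ → WithBot ℕ} {t : ℕ} (hc0 : c 0 = ⊥) :
    Ideal.span ({(p : RG p m i) ^ b 0} ∪ {x : RG p m i | ∃ j : ℕ, 1 ≤ j ∧ j ≤ t ∧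
        x = (p : RG p m i) ^ b j * (sigmaPow p m i (c j) - 1)}) =
      Ideal.span {x : RG p m i | ∃ j ≤ t,
        x = (p : RG p m i) ^ b j * (sigmaPow p m i (c j) - 1)} := by
  have hgens : {x : RG p m i | ∃ j ≤ t, x = (p : RG p m i) ^ b j * (sigmaPow p m i (c j) - 1)} =
      insert (-(p : RG p m i) ^ b 0) {x : RG p m i | ∃ j : ℕ, 1 ≤ j ∧ j ≤ t ∧
        x = (p : RG p m i) ^ b j * (sigmaPow p m i (c j) - 1)} := by
    ext x
    simp only [Set.mem_ofPred_eq, Set.mem_insert_iff]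
    constructor
    · rintro ⟨_ | j, hj, rfl⟩
      · simp [hc0, sigmaPow]
      · exact Or.inr ⟨j + 1, by omega, hj, rfl⟩
    · rintro (rfl | ⟨j, -, hj, rfl⟩)
      · exact ⟨0, Nat.zero_le _, by simp [hc0, sigmaPow]⟩
      · exact ⟨j, hj, rfl⟩
  rw [hgens, Set.singleton_union, Ideal.span_insert, Ideal.span_insert, Ideal.span_singleton_neg]

end

theorem ann_of_ideal_gens_general (p m : ℕ) (hp : p.Prime) (i : ℕ)
    (t : ℕ) (b : ℕ → ℕ) (c : ℕ → WithBot ℕ)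
    (hb : ∀ j ≤ t, b j < m)
    (hbanti : ∀ j k : ℕ, j < k → k ≤ t → b k < b j)
    (hc : ∀ j ≤ t, c j < (i : WithBot ℕ))
    (hcmono : ∀ j k : ℕ, j < k → k ≤ t → c j < c k) :
    (c 0 = ⊥ →
      (Ideal.span ({(p : RG p m i) ^ b 0} ∪
          {x : RG p m i | ∃ j : ℕ, 1 ≤ j ∧ j ≤ t ∧
            x = (p : RG p m i) ^ b j * (sigmaPow p m i (c j) - 1)})).annihilator =
        Ideal.span ({x : RG p m i | ∃ j < t,
            x = (p : RG p m i) ^ (m - b j) * PelW p m i i (c (j + 1))} ∪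
          {(p : RG p m i) ^ (m - b t)})) ∧
    (c 0 ≠ ⊥ →
      (Ideal.span {x : RG p m i | ∃ j ≤ t,
          x = (p : RG p m i) ^ b j * (sigmaPow p m i (c j) - 1)}).annihilator =
        Ideal.span (insert (PelW p m i i (c 0))
          ({x : RG p m i | ∃ j < t,
              x = (p : RG p m i) ^ (m - b j) * PelW p m i i (c (j + 1))} ∪
            {(p : RG p m i) ^ (m - b t)}))) := by
  have hp0 : p ≠ 0 := hp.ne_zero
  have hb' : ∀ j ≤ t, b j ≤ m := fun j hj => (hb j hj).le
  have hbanti' : AntitoneOn b (Set.Iic t) :=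
    StrictAntiOn.antitoneOn fun j _ k hk hjk => hbanti j k hjk hk
  have hc' : ∀ j ≤ t, c j ≤ i := fun j hj => (hc j hj).le
  have hcmono' : StrictMonoOn c (Set.Iic t) := fun j _ k hk hjk => hcmono j k hjk hk
  refine ⟨fun hc0 => ?_, fun hc0 => ?_⟩ <;> ext r
  · rw [span_gens_eq_of_bot hc0, mem_annihilator_span_gens_iff hp0 hb']
    exact (mem_span_normGens_union_iff hp0 hbanti' hc' hcmono' hc0 r).symm
  · rw [mem_annihilator_span_gens_iff hp0 hb']
    exact (mem_span_insert_PelW_normGens_union_iff hp0 hb' hbanti' hc' hcmono' hc0 r).symm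

/-- Lemma 2.8 (`le:kerint`). -/
theorem ann_of_ideal_gens (p n m : ℕ) (hp : p.Prime) (hm : 1 ≤ m) (i : ℕ) (hin : i ≤ n)
    (t : ℕ) (b : ℕ → ℕ) (c : ℕ → WithBot ℕ)
    (hb : ∀ j ≤ t, b j < m)
    (hbanti : ∀ j k : ℕ, j < k → k ≤ t → b k < b j)
    (hc : ∀ j ≤ t, c j < (i : WithBot ℕ))
    (hcmono : ∀ j k : ℕ, j < k → k ≤ t → c j < c k) :
    (c 0 = ⊥ →
      (Ideal.span ({(p : RG p m i) ^ b 0} ∪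
          {x : RG p m i | ∃ j : ℕ, 1 ≤ j ∧ j ≤ t ∧
            x = (p : RG p m i) ^ b j * (sigmaPow p m i (c j) - 1)})).annihilator =
        Ideal.span ({x : RG p m i | ∃ j < t,
            x = (p : RG p m i) ^ (m - b j) * PelW p m i i (c (j + 1))} ∪
          {(p : RG p m i) ^ (m - b t)})) ∧
    (c 0 ≠ ⊥ →
      (Ideal.span {x : RG p m i | ∃ j ≤ t,
          x = (p : RG p m i) ^ b j * (sigmaPow p m i (c j) - 1)}).annihilator =
        Ideal.span (insert (PelW p m i i (c 0))
          ({x : RG p m i | ∃ j < t,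
              x = (p : RG p m i) ^ (m - b j) * PelW p m i i (c (j + 1))} ∪
            {(p : RG p m i) ^ (m - b t)}))) :=
  ann_of_ideal_gens_general p m hp i t b c hb hbanti hc hcmono
end

section
/- Suppose m ≥ 2, 0 ≤ i ≤ n, and t ∈ ℕ ∪ {0}. Let (b_j)_{j=0}^t be a decreasing sequence of elements of {0,…,m−2} and (c_j)_{j=0}^t an increasing sequence of elements of {−∞,0,…,i−1}, and assume t > 0 when c_0 = −∞. Assume additionally: (1) d^{p^i} ∈ U_m; (2) b_t = 0; (3) φ_d^{(m)}(P(i,c_j)) ∈ p^{1+b_{j−1}}R_m for all 0 < j ≤ t with c_j ≠ −∞, and φ_d^{(m)}(P(i,c_0)) = 0 if c_0 ≠ −∞. For r ∈ R_mG_i, suppose the image of (σ−d)r in R_{m−1}G_i lies in ann_{R_{m−1}G_i}⟨p^{b_0}, {p^{b_j}(σ^{p^{c_j}}−1)}_{j=1}^t⟩ if c_0 = −∞, respectively in ann_{R_{m−1}G_i}⟨{p^{b_j}(σ^{p^{c_j}}−1)}_{j=0}^t⟩ if c_0 ≠ −∞. Then, in R_mG_i, (σ−d)r lies in the ideal ⟨p^{m−1−b_0}P(i,c_1),…,p^{m−1−b_{t−1}}P(i,c_t),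 p^{m−1}(σ−d)⟩ if c_0 = −∞, respectively in ⟨P(i,c_0), p^{m−1−b_0}P(i,c_1),…,p^{m−1−b_{t−1}}P(i,c_t), p^{m−1}(σ−d)⟩ if c_0 ≠ −∞. -/
open scoped BigOperators

/-!
Write `ρ = (σ - d) r`. The hypothesis on `ρ̄` says
`p^{b_j} (σ^{p^{c_j}} - 1) ρ ≡ 0 mod p^{m-1}` for every `j`. Because `X^{p^c} - 1` is monic,
`P(i,c)` generates the annihilator of `σ^{p^c} - 1` even modulo any power of `p`, so the
congruences, taken in order, split off `P(i,c_0)`, then `p^{m-1-b_0} P(i,c_1)`, …, leaving a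
remainder divisible by `p^{m-1-b_t} = p^{m-1}`. Finally `φ_d` kills `ρ` and all these norm terms,
so the remainder `p^{m-1} τ` has `φ_d(τ) ∈ p R_m`; as `τ ≡ φ_d(τ) mod (σ - d)`, it lies in
`p^{m-1} (σ - d) R_m G_i`.
-/

open Polynomial MonoidAlgebra

lemma pow_sub_one_mul_sum_pow_mul {A : Type*} [CommRing A] (x : A) (a n : ℕ) :
    (x ^ a - 1) * ∑ k ∈ Finset.range n, x ^ (k * a) = x ^ (a * n) - 1 := by
  simp_rw [mul_comm _ a, pow_mul]
  rw [mul_comm, geom_sum_mul]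

lemma Polynomial.monic_X_pow_sub_one {R : Type*} [Ring R] {n : ℕ} (hn : n ≠ 0) :
    (X ^ n - 1 : R[X]).Monic := by
  simpa using monic_X_pow_sub_C (1 : R) hn

lemma Polynomial.Monic.mem_map_C_of_mul_mem {R : Type*} [CommRing R] {I : Ideal R}
    {f g : R[X]} (hf : f.Monic) (h : f * g ∈ I.map C) : g ∈ I.map C := by
  rw [← Ideal.mk_ker (I := I), ← ker_mapRingHom, RingHom.mem_ker, Polynomial.coe_mapRingHom]
    at h ⊢
  rwa [Polynomial.map_mul, (hf.map _).mul_right_eq_zero_iff] at h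

lemma MonoidAlgebra.mem_span_algebraMap_iff {R G : Type*} [CommRing R] [CommMonoid G] {r : R}
    {f : MonoidAlgebra R G} :
    f ∈ Ideal.span {algebraMap R (MonoidAlgebra R G) r} ↔
      ∀ g, f.coeff g ∈ Ideal.span {r} := by
  simp_rw [Ideal.mem_span_singleton']
  constructor
  · rintro ⟨w, rfl⟩ g
    exact ⟨w.coeff g, by simp [coe_algebraMap, coeff_mul_single_one]⟩
  · intro h
    choose w hw using h
    refine ⟨∑ g ∈ f.coeff.support, single g (w g), ?_⟩
    conv_rhs => rw [← f.sum_coeff_single]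
    rw [Finset.sum_mul, Finsupp.sum]
    refine Finset.sum_congr rfl fun g _ => ?_
    rw [coe_algebraMap, Function.comp_apply, single_mul_single, mul_one, Algebra.algebraMap_self,
      RingHom.id_apply, hw]

lemma ZMod.intCast_mem_span_pow {p m δ : ℕ} {x : ℤ} (h : (p : ℤ) ^ δ ∣ x) :
    (x : ZMod (p ^ m)) ∈ Ideal.span {(p : ZMod (p ^ m)) ^ δ} := by
  obtain ⟨y, rfl⟩ := h
  exact Ideal.mem_span_singleton.mpr ⟨y, by push_cast; ring⟩

lemma ZMod.mem_span_pow_of_castHom_eq_zero {p m δ : ℕ} (h : δ ≤ m) {x : ZMod (p ^ m)}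
    (hx : ZMod.castHom (pow_dvd_pow p h) (ZMod (p ^ δ)) x = 0) :
    x ∈ Ideal.span {(p : ZMod (p ^ m)) ^ δ} := by
  obtain ⟨x, rfl⟩ := ZMod.intCast_surjective x
  rw [map_intCast, ZMod.intCast_zmod_eq_zero_iff_dvd] at hx
  exact ZMod.intCast_mem_span_pow (by exact_mod_cast hx)

lemma ZMod.mem_span_pow_of_pow_mul_mem {p m a e : ℕ} [NeZero p] (hae : a ≤ e) (hem : e ≤ m)
    {x : ZMod (p ^ m)} (h : (p : ZMod (p ^ m)) ^ a * x ∈ Ideal.span {(p : ZMod (p ^ m)) ^ e}) :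
    x ∈ Ideal.span {(p : ZMod (p ^ m)) ^ (e - a)} := by
  obtain ⟨x, rfl⟩ := ZMod.intCast_surjective x
  obtain ⟨y, hy⟩ := Ideal.mem_span_singleton.mp h
  have hcast := congrArg (ZMod.castHom (pow_dvd_pow p hem) (ZMod (p ^ e))) hy
  have hpe : (p : ZMod (p ^ e)) ^ e = 0 := by rw [← Nat.cast_pow, ZMod.natCast_self]
  simp only [map_mul, map_pow, map_natCast, map_intCast, hpe, zero_mul] at hcast
  have hdvd : (p : ℤ) ^ a * (p : ℤ) ^ (e - a) ∣ (p : ℤ) ^ a * x := by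
    rw [← pow_add, Nat.add_sub_cancel' hae]
    exact_mod_cast (ZMod.intCast_zmod_eq_zero_iff_dvd _ _).mp (by push_cast; exact hcast)
  exact ZMod.intCast_mem_span_pow
    ((mul_dvd_mul_iff_left (pow_ne_zero _ (by exact_mod_cast NeZero.ne p))).mp hdvd)

namespace CyclicGroupRing

variable {p m i : ℕ}

lemma intCast_eq_one_of_mem_Uset {x : ℤ} (hx : x ∈ Uset p m) : (x : Rm p m) = 1 := by
  obtain ⟨k, rfl⟩ := hx
  push_cast
  rw [← Nat.cast_pow, ZMod.natCast_self, zero_mul, add_zero]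

lemma sg_pow (t : ℕ) :
    sg p m i ^ t = of (Rm p m) (Cyc p i) (Multiplicative.ofAdd (t : ZMod (p ^ i))) := by
  rw [sg, ← map_pow, ← ofAdd_nsmul, nsmul_one]

lemma sg_pow_card : sg p m i ^ p ^ i = 1 := by
  rw [sg_pow, ZMod.natCast_self, ofAdd_zero, map_one]

lemma natCast_pow_self_eq_zero : (p : RG p m i) ^ m = 0 := by
  rw [← Nat.cast_pow, ← map_natCast (algebraMap (Rm p m) (RG p m i)), ZMod.natCast_self,
    map_zero]

lemma aeval_sg_surjective [NeZero p] : Function.Surjective (aeval (R := Rm p m) (sg p m i)) := by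
  intro τ
  induction τ using MonoidAlgebra.induction_on with
  | of g => exact ⟨X ^ (Multiplicative.toAdd g).val, by simp [sg_pow]⟩
  | add f g hf hg =>
    obtain ⟨F, rfl⟩ := hf
    obtain ⟨G, rfl⟩ := hg
    exact ⟨F + G, map_add _ _ _⟩
  | smul r f hf =>
    obtain ⟨F, rfl⟩ := hf
    exact ⟨r • F, map_smul _ _ _⟩

lemma coeff_aeval_sg {F : (Rm p m)[X]} (hF : F.natDegree < p ^ i) {t : ℕ} (ht : t < p ^ i) :
    (aeval (sg p m i) F).coeff (Multiplicative.ofAdd (t : ZMod (p ^ i))) = F.coeff t := by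
  rw [aeval_eq_sum_range' hF]
  simp_rw [sg_pow, of_apply, smul_single, smul_eq_mul, mul_one]
  rw [MonoidAlgebra.coeff_sum, Finsupp.finsetSum_apply, Finset.sum_eq_single t]
  · simp
  · intro s hs hst
    rw [coeff_single, Finsupp.single_apply, if_neg]
    intro h
    apply hst
    have := congrArg ZMod.val (Multiplicative.ofAdd.injective h)
    rwa [ZMod.val_natCast_of_lt (Finset.mem_range.mp hs), ZMod.val_natCast_of_lt ht] at this
  · exact fun h => absurd (Finset.mem_range.mpr ht) h

lemma X_pow_sub_one_dvd_of_aeval_sg_eq_zero [NeZero p] {F : (Rm p m)[X]}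
    (h : aeval (sg p m i) F = 0) : (X ^ p ^ i - 1 : (Rm p m)[X]) ∣ F := by
  nontriviality Rm p m
  set M : (Rm p m)[X] := X ^ p ^ i - 1
  have hmonic : M.Monic := monic_X_pow_sub_one (NeZero.ne _)
  have hdeg : M.natDegree = p ^ i := by
    simpa using natDegree_X_pow_sub_C (n := p ^ i) (r := (1 : Rm p m))
  rw [← modByMonic_eq_zero_iff_dvd hmonic]
  have hrem : aeval (sg p m i) (F %ₘ M) = 0 := by
    rw [modByMonic_eq_sub_mul_div F M]
    simp [M, h, sg_pow_card]
  have hremdeg : (F %ₘ M).natDegree < p ^ i := by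
    refine hdeg ▸ natDegree_modByMonic_lt _ hmonic fun h1 => ?_
    have := hdeg.symm.trans (congrArg natDegree h1)
    exact NeZero.ne (p ^ i) (by simpa using this)
  ext t
  rw [Polynomial.coeff_zero]
  rcases lt_or_ge t (p ^ i) with ht | ht
  · rw [← coeff_aeval_sg hremdeg ht, hrem, MonoidAlgebra.coeff_zero, Finsupp.coe_zero,
      Pi.zero_apply]
  · exact coeff_eq_zero_of_natDegree_lt (hremdeg.trans_le ht)

lemma sg_pow_sub_one_mul_pel {c : ℕ} (hc : c ≤ i) :
    (sg p m i ^ p ^ c - 1) * Pel p m i i c = 0 := by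
  rw [Pel, pow_sub_one_mul_sum_pow_mul, ← pow_add, Nat.add_sub_cancel' hc, sg_pow_card, sub_self]

lemma exists_sub_pel_mul_mem_of_sg_pow_sub_one_mul_mem [NeZero p] {c δ : ℕ} (hc : c ≤ i)
    {τ : RG p m i} (h : (sg p m i ^ p ^ c - 1) * τ ∈ Ideal.span {(p : RG p m i) ^ δ}) :
    ∃ z, τ - Pel p m i i c * z ∈ Ideal.span {(p : RG p m i) ^ δ} := by
  set S : (Rm p m)[X] := ∑ k ∈ Finset.range (p ^ (i - c)), X ^ (k * p ^ c)
  have hS : aeval (sg p m i) S = Pel p m i i c := by simp [S, Pel]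
  have hfactor : (X ^ p ^ c - 1) * S = X ^ p ^ i - 1 := by
    rw [pow_sub_one_mul_sum_pow_mul, ← pow_add, Nat.add_sub_cancel' hc]
  obtain ⟨w, hw⟩ := Ideal.mem_span_singleton'.mp h
  obtain ⟨F, rfl⟩ := aeval_sg_surjective (p := p) (m := m) (i := i) τ
  obtain ⟨W, rfl⟩ := aeval_sg_surjective (p := p) (m := m) (i := i) w
  obtain ⟨Q, hQ⟩ := X_pow_sub_one_dvd_of_aeval_sg_eq_zero (i := i)
    (F := (X ^ p ^ c - 1) * F - C ((p : Rm p m) ^ δ) * W) (by simp [← hw, mul_comm])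
  obtain ⟨H, hH⟩ : C ((p : Rm p m) ^ δ) ∣ F - S * Q := by
    rw [← Ideal.mem_span_singleton, ← Set.image_singleton, ← Ideal.map_span]
    refine (monic_X_pow_sub_one (NeZero.ne (p ^ c))).mem_map_C_of_mul_mem ?_
    rw [Ideal.map_span, Set.image_singleton, Ideal.mem_span_singleton]
    exact ⟨W, by linear_combination hQ - Q * hfactor⟩
  refine ⟨aeval (sg p m i) Q, Ideal.mem_span_singleton.mpr ⟨aeval (sg p m i) H, ?_⟩⟩
  simpa [hS] using congrArg (aeval (sg p m i)) hH

lemma mem_span_p_pow_iff {k : ℕ} {f : RG p m i} :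
    f ∈ Ideal.span {(p : RG p m i) ^ k} ↔
      ∀ g, f.coeff g ∈ Ideal.span {(p : Rm p m) ^ k} := by
  rw [← map_natCast (algebraMap (Rm p m) (RG p m i)), ← map_pow, mem_span_algebraMap_iff]

lemma coeff_p_pow_mul (k : ℕ) (f : RG p m i) (g : Cyc p i) :
    ((p : RG p m i) ^ k * f).coeff g = (p : Rm p m) ^ k * f.coeff g := by
  rw [← map_natCast (algebraMap (Rm p m) (RG p m i)), ← map_pow, coe_algebraMap,
    Function.comp_apply, coeff_single_one_mul, Algebra.algebraMap_self, RingHom.id_apply]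

lemma mem_span_p_pow_of_p_pow_mul_mem [NeZero p] {a e : ℕ} (hae : a ≤ e) (hem : e ≤ m)
    {f : RG p m i} (h : (p : RG p m i) ^ a * f ∈ Ideal.span {(p : RG p m i) ^ e}) :
    f ∈ Ideal.span {(p : RG p m i) ^ (e - a)} := by
  rw [mem_span_p_pow_iff] at h ⊢
  exact fun g => ZMod.mem_span_pow_of_pow_mul_mem hae hem (coeff_p_pow_mul a f g ▸ h g)

lemma barMap_eq_mapRingHom : barMap p m i =
    mapRingHom (Cyc p i) (ZMod.castHom (pow_dvd_pow p (Nat.sub_le m 1)) (Rm p (m - 1))) := rfl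

lemma barMap_p_pow_mul_sigmaPow_sub_one (b : ℕ) (c : WithBot ℕ) :
    barMap p m i ((p : RG p m i) ^ b * (sigmaPow p m i c - 1)) =
      (p : RG p (m - 1) i) ^ b * (sigmaPow p (m - 1) i c - 1) := by
  have hsg : barMap p m i (sg p m i) = sg p (m - 1) i := by
    rw [barMap_eq_mapRingHom, sg, sg, of_apply, of_apply, mapRingHom_single, RingHom.map_one]
  rw [barMap_eq_mapRingHom] at hsg ⊢
  cases c <;> simp [sigmaPow, hsg]

lemma mem_span_of_barMap_eq_zero {f : RG p m i} (h : barMap p m i f = 0) :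
    f ∈ Ideal.span {(p : RG p m i) ^ (m - 1)} := by
  refine mem_span_p_pow_iff.mpr fun g => ZMod.mem_span_pow_of_castHom_eq_zero (Nat.sub_le m 1) ?_
  simpa [barMap_eq_mapRingHom] using congrArg (·.coeff g) h

lemma mul_mem_span_of_barMap_mem_annihilator {I : Ideal (RG p (m - 1) i)} {ρ s : RG p m i}
    (hρ : barMap p m i ρ ∈ I.annihilator) (hs : barMap p m i s ∈ I) :
    s * ρ ∈ Ideal.span {(p : RG p m i) ^ (m - 1)} := by
  refine mem_span_of_barMap_eq_zero ?_
  rw [barMap_eq_mapRingHom, map_mul, mul_comm, ← barMap_eq_mapRingHom]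
  exact Submodule.mem_annihilator.mp hρ _ hs

section Augmentation

variable [NeZero p] (d : ℤ) (hd : (d : Rm p m) ^ p ^ i = 1)

def powMonoidHom : Cyc p i →* Rm p m where
  toFun g := (d : Rm p m) ^ (Multiplicative.toAdd g).val
  map_one' := by simp
  map_mul' a b := by rw [toAdd_mul, ZMod.val_add, ← pow_eq_pow_mod _ hd, pow_add]

noncomputable def phiAlgHom : RG p m i →ₐ[Rm p m] Rm p m :=
  lift (Rm p m) (Rm p m) (Cyc p i) (powMonoidHom d hd)

lemma phiAlgHom_single (a : Cyc p i) (r : Rm p m) :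
    phiAlgHom d hd (single a r) = r * (d : Rm p m) ^ (Multiplicative.toAdd a).val :=
  lift_single _ _ _

lemma phiAlgHom_sg : phiAlgHom d hd (sg p m i) = d := by
  rw [sg, of_apply, phiAlgHom_single, one_mul, toAdd_ofAdd, ZMod.val_one_eq_one_mod,
    ← pow_eq_pow_mod _ hd, pow_one]

lemma phiM_eq_phiAlgHom (f : RG p m i) : phiM p m i d f = phiAlgHom d hd f := by
  induction f using MonoidAlgebra.induction_linear with
  | zero => simp [phiM]
  | add f g hf hg =>
    simp only [phiM, map_add, ← hf, ← hg, MonoidAlgebra.coeff_add, Finsupp.add_apply, add_mul,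
      Finset.sum_add_distrib]
  | single a r =>
    rw [phiM, phiAlgHom_single, Finset.sum_eq_single (Multiplicative.toAdd a).val]
    · simp
    · intro t ht hta
      rw [coeff_single, Finsupp.single_apply, if_neg, zero_mul]
      rintro rfl
      exact hta (ZMod.val_natCast_of_lt (Finset.mem_range.mp ht)).symm
    · exact fun h => absurd (Finset.mem_range.mpr (ZMod.val_lt _)) h

lemma sub_algebraMap_phiAlgHom_mem (τ : RG p m i) :
    τ - algebraMap (Rm p m) (RG p m i) (phiAlgHom d hd τ) ∈
      Ideal.span {sg p m i - (d : RG p m i)} := by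
  obtain ⟨F, rfl⟩ := aeval_sg_surjective τ
  obtain ⟨Q, hQ⟩ := X_sub_C_dvd_sub_C_eval (a := (d : Rm p m)) (p := F)
  refine Ideal.mem_span_singleton.mpr ⟨aeval (sg p m i) Q, ?_⟩
  rw [← aeval_algHom_apply, phiAlgHom_sg, coe_aeval_eq_eval]
  simpa using congrArg (aeval (sg p m i)) hQ

lemma mem_span_p_pow_mul_sub_of_phiAlgHom_eq_zero (hm : m ≠ 0) {y : RG p m i}
    (hy : y ∈ Ideal.span {(p : RG p m i) ^ (m - 1)}) (hφ : phiAlgHom d hd y = 0) :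
    y ∈ Ideal.span {(p : RG p m i) ^ (m - 1) * (sg p m i - d)} := by
  obtain ⟨τ, rfl⟩ := Ideal.mem_span_singleton.mp hy
  have hφτ : phiAlgHom d hd τ ∈ Ideal.span {((p : Rm p m) ^ 1)} := by
    rw [← Nat.sub_sub_self (Nat.one_le_iff_ne_zero.mpr hm)]
    refine ZMod.mem_span_pow_of_pow_mul_mem (Nat.sub_le m 1) le_rfl ?_
    rw [map_mul, map_pow, map_natCast] at hφ
    exact hφ ▸ zero_mem _
  obtain ⟨u, hu⟩ := Ideal.mem_span_singleton.mp hφτ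
  obtain ⟨w, hw⟩ := Ideal.mem_span_singleton.mp (sub_algebraMap_phiAlgHom_mem d hd τ)
  rw [hu, map_mul, map_pow, map_natCast, pow_one] at hw
  have hpm : (p : RG p m i) ^ (m - 1) * p = 0 := by
    rw [← pow_succ, Nat.sub_add_cancel (Nat.one_le_iff_ne_zero.mpr hm), natCast_pow_self_eq_zero]
  exact Ideal.mem_span_singleton.mpr
    ⟨w, by linear_combination (p : RG p m i) ^ (m - 1) * hw + algebraMap _ _ u * hpm⟩

lemma mem_sup_span_of_phiAlgHom_eq_zero (hm : m ≠ 0) {I : Ideal (RG p m i)}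
    (hI : I ≤ RingHom.ker (phiAlgHom d hd)) {ρ : RG p m i}
    (hρ : ρ ∈ I ⊔ Ideal.span {(p : RG p m i) ^ (m - 1)}) (hφ : phiAlgHom d hd ρ = 0) :
    ρ ∈ I ⊔ Ideal.span {(p : RG p m i) ^ (m - 1) * (sg p m i - d)} := by
  obtain ⟨x, hx, y, hy, rfl⟩ := Submodule.mem_sup.mp hρ
  rw [map_add, RingHom.mem_ker.mp (hI hx), zero_add] at hφ
  exact Submodule.add_mem_sup hx (mem_span_p_pow_mul_sub_of_phiAlgHom_eq_zero d hd hm hy hφ)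

end Augmentation

section Descent

/-- `P(i,c)` generates the annihilator of `σ^{p^c} - 1`; for `c = -∞` that element is `-1`,
whose annihilator is `0` (not the ideal generated by `P(i,-∞) = 1`). -/
noncomputable def normIdeal (p m i : ℕ) (c : WithBot ℕ) : Ideal (RG p m i) :=
  WithBot.recBotCoe ⊥ (fun k => Ideal.span {Pel p m i i k}) c

lemma normIdeal_le_span_pelW (c : WithBot ℕ) :
    normIdeal p m i c ≤ Ideal.span {PelW p m i i c} := by
  cases c <;> simp [normIdeal, PelW]

lemma normIdeal_of_ne_bot {c : WithBot ℕ} (hc : c ≠ ⊥) :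
    normIdeal p m i c = Ideal.span {PelW p m i i c} := by
  obtain ⟨k, rfl⟩ := WithBot.ne_bot_iff_exists.mp hc
  rfl

lemma normIdeal_le_ker_phiAlgHom [NeZero p] {d : ℤ} (hd : (d : Rm p m) ^ p ^ i = 1)
    {c : WithBot ℕ} (h : c ≠ ⊥ → phiM p m i d (PelW p m i i c) = 0) :
    normIdeal p m i c ≤ RingHom.ker (phiAlgHom d hd) := by
  cases c with
  | bot => exact bot_le
  | coe k =>
    rw [normIdeal_of_ne_bot WithBot.coe_ne_bot, Ideal.span_le, Set.singleton_subset_iff,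
      SetLike.mem_coe, RingHom.mem_ker, ← phiM_eq_phiAlgHom]
    exact h WithBot.coe_ne_bot

lemma sigmaPow_sub_one_mul_eq_zero_of_mem_normIdeal {c c' : WithBot ℕ} (hc : c ≤ i)
    (hcc' : c ≤ c') {y : RG p m i} (hy : y ∈ normIdeal p m i c) :
    (sigmaPow p m i c' - 1) * y = 0 := by
  cases c with
  | bot => simp_all [normIdeal]
  | coe k =>
    obtain ⟨k', rfl⟩ :=
      WithBot.ne_bot_iff_exists.mp (ne_bot_of_le_ne_bot WithBot.coe_ne_bot hcc')
    obtain ⟨z, rfl⟩ := Ideal.mem_span_singleton.mp hy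
    have hkk' : k ≤ k' := WithBot.coe_le_coe.mp hcc'
    have hpow : sg p m i ^ p ^ k' = (sg p m i ^ p ^ k) ^ p ^ (k' - k) := by
      rw [← pow_mul, ← pow_add, Nat.add_sub_cancel' hkk']
    rw [sigmaPow, WithBot.recBotCoe_coe, hpow, ← geom_sum_mul, mul_assoc,
      ← mul_assoc _ (Pel _ _ _ _ _),
      sg_pow_sub_one_mul_pel (WithBot.coe_le_coe.mp hc : k ≤ i), zero_mul, mul_zero]

lemma exists_mem_normIdeal_sub_mem_span [NeZero p] {c : WithBot ℕ} (hc : c ≤ i) {δ : ℕ}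
    {τ : RG p m i} (h : (sigmaPow p m i c - 1) * τ ∈ Ideal.span {(p : RG p m i) ^ δ}) :
    ∃ y ∈ normIdeal p m i c, τ - y ∈ Ideal.span {(p : RG p m i) ^ δ} := by
  cases c with
  | bot => exact ⟨0, zero_mem _, by simpa [sigmaPow] using h⟩
  | coe k =>
    obtain ⟨z, hz⟩ :=
      exists_sub_pel_mul_mem_of_sg_pow_sub_one_mul_mem (WithBot.coe_le_coe.mp hc : k ≤ i) h
    exact ⟨_, Ideal.mul_mem_right z _ (Ideal.mem_span_singleton_self _), hz⟩

lemma exists_mem_normIdeal_sub_p_pow_mul_mem_span [NeZero p] {c : WithBot ℕ} (hc : c ≤ i)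
    {a b : ℕ} (hab : a + b ≤ m - 1) {x : RG p m i} (hx : x ∈ Ideal.span {(p : RG p m i) ^ a})
    (h : (p : RG p m i) ^ b * (sigmaPow p m i c - 1) * x ∈
      Ideal.span {(p : RG p m i) ^ (m - 1)}) :
    ∃ y ∈ normIdeal p m i c,
      x - (p : RG p m i) ^ a * y ∈ Ideal.span {(p : RG p m i) ^ (m - 1 - b)} := by
  obtain ⟨τ, rfl⟩ := Ideal.mem_span_singleton.mp hx
  have hτ : (sigmaPow p m i c - 1) * τ ∈ Ideal.span {(p : RG p m i) ^ (m - 1 - (a + b))} :=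
    mem_span_p_pow_of_p_pow_mul_mem hab (Nat.sub_le m 1) (by convert h using 1; ring)
  obtain ⟨y, hy, hτy⟩ := exists_mem_normIdeal_sub_mem_span hc hτ
  obtain ⟨w, hw⟩ := Ideal.mem_span_singleton.mp hτy
  refine ⟨y, hy, Ideal.mem_span_singleton.mpr ⟨w, ?_⟩⟩
  rw [← mul_sub, hw, ← mul_assoc, ← pow_add]
  congr 2
  omega

noncomputable def scaledNormIdeal (p m i t : ℕ) (b : ℕ → ℕ) (c : ℕ → WithBot ℕ) :
    Ideal (RG p m i) :=
  Ideal.span {x | ∃ j < t, x = (p : RG p m i) ^ (m - 1 - b j) * PelW p m i i (c (j + 1))}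

lemma scaledNormIdeal_le_ker_phiAlgHom [NeZero p] {d : ℤ} (hd : (d : Rm p m) ^ p ^ i = 1)
    {t : ℕ} {b : ℕ → ℕ} {c : ℕ → WithBot ℕ} (hb : ∀ j < t, b j < m)
    (h : ∀ j < t,
      phiM p m i d (PelW p m i i (c (j + 1))) ∈ Ideal.span {(p : Rm p m) ^ (1 + b j)}) :
    scaledNormIdeal p m i t b c ≤ RingHom.ker (phiAlgHom d hd) := by
  rw [scaledNormIdeal, Ideal.span_le]
  rintro _ ⟨j, hj, rfl⟩
  obtain ⟨u, hu⟩ := Ideal.mem_span_singleton.mp (h j hj)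
  have hpm : (p : Rm p m) ^ (m - 1 - b j) * (p : Rm p m) ^ (1 + b j) = 0 := by
    rw [← pow_add, show m - 1 - b j + (1 + b j) = m by have := hb j hj; omega, ← Nat.cast_pow,
      ZMod.natCast_self]
  rw [SetLike.mem_coe, RingHom.mem_ker, map_mul, map_pow, map_natCast, ← phiM_eq_phiAlgHom, hu,
    ← mul_assoc, hpm, zero_mul]

lemma scaledNormIdeal_shift_le {t : ℕ} {b : ℕ → ℕ} {c : ℕ → WithBot ℕ} :
    scaledNormIdeal p m i t (fun j => b (j + 1)) (fun j => c (j + 1)) ≤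
      scaledNormIdeal p m i (t + 1) b c :=
  Ideal.span_mono fun _ ⟨j, hj, hx⟩ => ⟨j + 1, by omega, hx⟩

lemma p_pow_mul_mem_scaledNormIdeal {t : ℕ} {b : ℕ → ℕ} {c : ℕ → WithBot ℕ}
    {y : RG p m i}
    (hy : y ∈ normIdeal p m i (c 1)) :
    (p : RG p m i) ^ (m - 1 - b 0) * y ∈ scaledNormIdeal p m i (t + 1) b c := by
  obtain ⟨z, rfl⟩ := Ideal.mem_span_singleton.mp (normIdeal_le_span_pelW _ hy)
  rw [← mul_assoc]
  exact Ideal.mul_mem_right _ _ (Ideal.subset_span ⟨0, t.succ_pos, rfl⟩)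

theorem exists_mem_normIdeal_sub_mem_scaledNormIdeal_sup [NeZero p] (t : ℕ) {b : ℕ → ℕ}
    {c : ℕ → WithBot ℕ} (hbanti : ∀ j k, j < k → k ≤ t → b k < b j) (hbt : b t = 0)
    (hc : ∀ j ≤ t, c j ≤ i) (hcmono : ∀ j k, j < k → k ≤ t → c j ≤ c k)
    {a : ℕ} (hab : a + b 0 ≤ m - 1) {x : RG p m i} (hx : x ∈ Ideal.span {(p : RG p m i) ^ a})
    (hmul : ∀ l ≤ t, (p : RG p m i) ^ b l * (sigmaPow p m i (c l) - 1) * x ∈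
      Ideal.span {(p : RG p m i) ^ (m - 1)}) :
    ∃ y ∈ normIdeal p m i (c 0), x - (p : RG p m i) ^ a * y ∈
      scaledNormIdeal p m i t b c ⊔ Ideal.span {(p : RG p m i) ^ (m - 1)} := by
  obtain ⟨y, hy, hxy⟩ :=
    exists_mem_normIdeal_sub_p_pow_mul_mem_span (hc 0 t.zero_le) hab hx (hmul 0 t.zero_le)
  refine ⟨y, hy, ?_⟩
  induction t generalizing b c a x y with
  | zero => exact Ideal.mem_sup_right (by simpa [hbt] using hxy)
  | succ t ih =>
    have hmul' : ∀ l ≤ t, (p : RG p m i) ^ b (l + 1) * (sigmaPow p m i (c (l + 1)) - 1) *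
        (x - (p : RG p m i) ^ a * y) ∈ Ideal.span {(p : RG p m i) ^ (m - 1)} := by
      intro l hl
      have hkill := sigmaPow_sub_one_mul_eq_zero_of_mem_normIdeal (hc 0 (by omega))
        (hcmono 0 (l + 1) l.succ_pos (by omega)) hy
      convert hmul (l + 1) (by omega) using 1
      linear_combination (-(p : RG p m i) ^ b (l + 1) * (p : RG p m i) ^ a) * hkill
    have hb01 := hbanti 0 1 Nat.one_pos (by omega)
    obtain ⟨y', hy', hxy'⟩ := exists_mem_normIdeal_sub_p_pow_mul_mem_span (hc 1 (by omega))
      (show m - 1 - b 0 + b 1 ≤ m - 1 by omega) hxy (hmul' 0 t.zero_le)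
    have := ih (fun j k hjk hk => hbanti (j + 1) (k + 1) (by omega) (by omega)) hbt
      (fun j hj => hc (j + 1) (by omega))
      (fun j k hjk hk => hcmono (j + 1) (k + 1) (by omega) (by omega))
      (by simp only [zero_add]; omega) hxy hmul' y' hy' hxy'
    rw [← sub_add_cancel (x - (p : RG p m i) ^ a * y) ((p : RG p m i) ^ (m - 1 - b 0) * y')]
    exact add_mem (sup_le_sup_right scaledNormIdeal_shift_le _ this)
      (Ideal.mem_sup_left (p_pow_mul_mem_scaledNormIdeal hy'))

theorem mem_normIdeal_sup_of_forall_mul_mem [NeZero p] (hm : m ≠ 0) {d : ℤ}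
    (hd : (d : Rm p m) ^ p ^ i = 1) (t : ℕ) {b : ℕ → ℕ} {c : ℕ → WithBot ℕ}
    (hb0 : b 0 ≤ m - 1) (hbanti : ∀ j k, j < k → k ≤ t → b k < b j) (hbt : b t = 0)
    (hc : ∀ j ≤ t, c j ≤ i) (hcmono : ∀ j k, j < k → k ≤ t → c j ≤ c k)
    (hker : normIdeal p m i (c 0) ⊔ scaledNormIdeal p m i t b c ≤ RingHom.ker (phiAlgHom d hd))
    {ρ : RG p m i} (hφρ : phiAlgHom d hd ρ = 0)
    (hmul : ∀ l ≤ t, (p : RG p m i) ^ b l * (sigmaPow p m i (c l) - 1) * ρ ∈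
      Ideal.span {(p : RG p m i) ^ (m - 1)}) :
    ρ ∈ normIdeal p m i (c 0) ⊔ Ideal.span {(p : RG p m i) ^ (m - 1) * (sg p m i - d)} ⊔
      scaledNormIdeal p m i t b c := by
  obtain ⟨y, hy, hρy⟩ := exists_mem_normIdeal_sub_mem_scaledNormIdeal_sup t hbanti hbt hc
    hcmono (a := 0) (by omega) (by simp) hmul
  rw [pow_zero, one_mul] at hρy
  rw [sup_right_comm]
  refine mem_sup_span_of_phiAlgHom_eq_zero d hd hm hker ?_ hφρ
  rw [← sub_add_cancel ρ y, sup_assoc]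
  exact add_mem (Ideal.mem_sup_right hρy) (Ideal.mem_sup_left hy)

end Descent

end CyclicGroupRing

open CyclicGroupRing

theorem tech_general (p m : ℕ) (hp : p.Prime) (hm : 2 ≤ m) (i : ℕ)
    (t : ℕ) (b : ℕ → ℕ) (c : ℕ → WithBot ℕ)
    (hb : ∀ j ≤ t, b j ≤ m - 2)
    (hbanti : ∀ j k : ℕ, j < k → k ≤ t → b k < b j)
    (hc : ∀ j ≤ t, c j < (i : WithBot ℕ))
    (hcmono : ∀ j k : ℕ, j < k → k ≤ t → c j < c k)
    (d : ℤ)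
    (h1 : d ^ p ^ i ∈ Uset p m)
    (h2 : b t = 0)
    (h3 : ∀ j : ℕ, 0 < j → j ≤ t → c j ≠ ⊥ →
      phiM p m i d (PelW p m i i (c j)) ∈ Ideal.span {(p : Rm p m) ^ (1 + b (j - 1))})
    (h3' : c 0 ≠ ⊥ → phiM p m i d (PelW p m i i (c 0)) = 0)
    (r : RG p m i) :
    (c 0 = ⊥ →
      barMap p m i ((sg p m i - (d : RG p m i)) * r) ∈
        (Ideal.span ({(p : RG p (m - 1) i) ^ b 0} ∪
          {x : RG p (m - 1) i | ∃ j : ℕ, 1 ≤ j ∧ j ≤ t ∧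
            x = (p : RG p (m - 1) i) ^ b j *
              (sigmaPow p (m - 1) i (c j) - 1)})).annihilator →
      (sg p m i - (d : RG p m i)) * r ∈
        Ideal.span (insert
          ((p : RG p m i) ^ (m - 1) * (sg p m i - (d : RG p m i)))
          {x : RG p m i | ∃ j < t,
            x = (p : RG p m i) ^ (m - 1 - b j) * PelW p m i i (c (j + 1))})) ∧
    (c 0 ≠ ⊥ →
      barMap p m i ((sg p m i - (d : RG p m i)) * r) ∈
        (Ideal.span {x : RG p (m - 1) i | ∃ j ≤ t,
          x = (p : RG p (m - 1) i) ^ b j *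
            (sigmaPow p (m - 1) i (c j) - 1)}).annihilator →
      (sg p m i - (d : RG p m i)) * r ∈
        Ideal.span (insert (PelW p m i i (c 0)) (insert
          ((p : RG p m i) ^ (m - 1) * (sg p m i - (d : RG p m i)))
          {x : RG p m i | ∃ j < t,
            x = (p : RG p m i) ^ (m - 1 - b j) * PelW p m i i (c (j + 1))}))) := by
  have : NeZero p := ⟨hp.ne_zero⟩
  have hd : (d : Rm p m) ^ p ^ i = 1 := by exact_mod_cast intCast_eq_one_of_mem_Uset h1
  have hker : normIdeal p m i (c 0) ⊔ scaledNormIdeal p m i t b c ≤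
      RingHom.ker (phiAlgHom d hd) :=
    sup_le (normIdeal_le_ker_phiAlgHom hd h3') <| scaledNormIdeal_le_ker_phiAlgHom hd
      (fun j hj => by have := hb j hj.le; omega)
      fun j hj => by simpa using h3 (j + 1) j.succ_pos hj (ne_bot_of_gt (hcmono 0 _ j.succ_pos hj))
  have key := mem_normIdeal_sup_of_forall_mul_mem (by omega) hd t
    (by have := hb 0 t.zero_le; omega) hbanti h2 (fun j hj => (hc j hj).le)
    (fun j k hjk hk => (hcmono j k hjk hk).le) hker (ρ := (sg p m i - d) * r)
    (by simp [phiAlgHom_sg])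
  refine ⟨fun hc0 hann => ?_, fun hc0 hann => ?_⟩
  · have := key fun l hl => mul_mem_span_of_barMap_mem_annihilator hann <| by
      rw [barMap_p_pow_mul_sigmaPow_sub_one]
      rcases Nat.eq_zero_or_pos l with rfl | hl0
      · rw [hc0, sigmaPow, WithBot.recBotCoe_bot, zero_sub, mul_neg, mul_one]
        exact neg_mem (Ideal.subset_span (Set.mem_union_left _ rfl))
      · exact Ideal.subset_span (Set.mem_union_right _ ⟨l, hl0, hl, rfl⟩)
    rwa [hc0, normIdeal, WithBot.recBotCoe_bot, bot_sup_eq, scaledNormIdeal,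
      ← Ideal.span_insert] at this
  · have := key fun l hl => mul_mem_span_of_barMap_mem_annihilator hann
      (by rw [barMap_p_pow_mul_sigmaPow_sub_one]; exact Ideal.subset_span ⟨l, hl, rfl⟩)
    rwa [normIdeal_of_ne_bot hc0, sup_assoc, scaledNormIdeal, ← Ideal.span_insert,
      ← Ideal.span_insert] at this

/-- Lemma 2.9 (`le:tech`). -/
theorem tech (p n m : ℕ) (hp : p.Prime) (hm : 2 ≤ m) (i : ℕ) (hin : i ≤ n)
    (t : ℕ) (b : ℕ → ℕ) (c : ℕ → WithBot ℕ)
    (hb : ∀ j ≤ t, b j ≤ m - 2)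
    (hbanti : ∀ j k : ℕ, j < k → k ≤ t → b k < b j)
    (hc : ∀ j ≤ t, c j < (i : WithBot ℕ))
    (hcmono : ∀ j k : ℕ, j < k → k ≤ t → c j < c k)
    (ht : c 0 = ⊥ → 0 < t)
    (d : ℤ)
    (h1 : d ^ p ^ i ∈ Uset p m)
    (h2 : b t = 0)
    (h3 : ∀ j : ℕ, 0 < j → j ≤ t → c j ≠ ⊥ →
      phiM p m i d (PelW p m i i (c j)) ∈ Ideal.span {(p : Rm p m) ^ (1 + b (j - 1))})
    (h3' : c 0 ≠ ⊥ → phiM p m i d (PelW p m i i (c 0)) = 0)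
    (r : RG p m i) :
    (c 0 = ⊥ →
      barMap p m i ((sg p m i - (d : RG p m i)) * r) ∈
        (Ideal.span ({(p : RG p (m - 1) i) ^ b 0} ∪
          {x : RG p (m - 1) i | ∃ j : ℕ, 1 ≤ j ∧ j ≤ t ∧
            x = (p : RG p (m - 1) i) ^ b j *
              (sigmaPow p (m - 1) i (c j) - 1)})).annihilator →
      (sg p m i - (d : RG p m i)) * r ∈
        Ideal.span (insert
          ((p : RG p m i) ^ (m - 1) * (sg p m i - (d : RG p m i)))
          {x : RG p m i | ∃ j < t,
            x = (p : RG p m i) ^ (m - 1 - b j) * PelW p m i i (c (j + 1))})) ∧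
    (c 0 ≠ ⊥ →
      barMap p m i ((sg p m i - (d : RG p m i)) * r) ∈
        (Ideal.span {x : RG p (m - 1) i | ∃ j ≤ t,
          x = (p : RG p (m - 1) i) ^ b j *
            (sigmaPow p (m - 1) i (c j) - 1)}).annihilator →
      (sg p m i - (d : RG p m i)) * r ∈
        Ideal.span (insert (PelW p m i i (c 0)) (insert
          ((p : RG p m i) ^ (m - 1) * (sg p m i - (d : RG p m i)))
          {x : RG p m i | ∃ j < t,
            x = (p : RG p m i) ^ (m - 1 - b j) * PelW p m i i (c (j + 1))}))) :=
  tech_general p m hp hm i t b c hb hbanti hc hcmono d h1 h2 h3 h3' r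
end

section
/- Assume the hypotheses (I)–(V) of Theorem 1 hold for p, n, m, a = (a_0,…,a_{m−1}) and d, and let m ≥ 2. Suppose a_{m−1} ≠ −∞ and that for some v ∈ X_{a,d,m} and g_0,…,g_{m−1} ∈ R_mG one has (σ^{p^{a_{m−1}}}−1)v = p^{m−1}Σ_{i=0}^{m−1} g_i x_i in X_{a,d,m}. Then p^{m−1}g_{m−1} lies in the ideal ⟨p^{m−1}(σ−1)^{p^{a_{m−1}}−1}⟩ of R_mG. -/
open scoped BigOperators

/-!
Lift the relation to the free module on `y, x_0, …, x_{m-1}`. Its `y`-coordinate reads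
`(σ^{p^k} - 1) w = c (σ - d)`, and its `x_{m-1}`-coordinate reads
`p^{m-1} (g_{m-1} - c) = (σ^{p^k} - 1) u`, where `c` is the coefficient of the relation
`(σ - d) y = Σ pⁱ xᵢ`. Compute in `R_m G = ℤ[X] / (p^m, X^{p^n} - 1)` modulo `p`, where
`σ^{p^k} - 1 = (σ - 1)^{p^k}` and `d ≡ 1`. In the first identity a factor `σ - 1` can be
cancelled in `𝔽_p[X]`, so `c ≡ (σ - 1)^{p^k - 1} · (…)`. In the second, `X^{p^k} - 1` is monic,
so the factor `p^{m-1}` can be cancelled in `ℤ[X]`, and `g_{m-1} - c ≡ (σ - 1)^{p^k} · (…)`.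
Hence `g_{m-1} ∈ ((σ - 1)^{p^k - 1}, p)`, and multiplying by `p^{m-1}` kills the multiple of `p`.
-/

open Polynomial

section GroupRing

variable {p m n : ℕ}

lemma sg_pow_eq_single (t : ℕ) :
    sg p m n ^ t = MonoidAlgebra.single (Multiplicative.ofAdd (t : ZMod (p ^ n))) 1 := by
  rw [sg, ← map_pow, ← ofAdd_nsmul, nsmul_one]
  rfl

lemma sg_pow_card : sg p m n ^ p ^ n = 1 := by
  rw [sg_pow_eq_single, ZMod.natCast_self, ofAdd_zero]
  rfl

lemma intCast_eq_single (z : ℤ) : (z : RG p m n) = MonoidAlgebra.single 1 (z : Rm p m) := by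
  rw [← map_intCast (algebraMap (Rm p m) (RG p m n)), MonoidAlgebra.coe_algebraMap]
  rfl

lemma natCast_pow_eq_zero : (p : RG p m n) ^ m = 0 := by
  rw [← Nat.cast_pow, ← Int.cast_natCast, intCast_eq_single, Int.cast_natCast,
    ZMod.natCast_self, MonoidAlgebra.single_zero]

lemma aeval_sg_surjective [NeZero p] : Function.Surjective (aeval (R := ℤ) (sg p m n)) := by
  have : NeZero (p ^ n) := ⟨pow_ne_zero n (NeZero.ne p)⟩
  intro x
  induction x using MonoidAlgebra.induction with
  | zero => exact ⟨0, map_zero _⟩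
  | single_add γ r f _ _ ih =>
    obtain ⟨F, hF⟩ := ih
    refine ⟨C (r.val : ℤ) * X ^ γ.toAdd.val + F, ?_⟩
    rw [map_add, hF, map_mul, map_pow, aeval_X, aeval_C, sg_pow_eq_single, eq_intCast,
      intCast_eq_single, MonoidAlgebra.single_mul_single, one_mul, mul_one, ZMod.natCast_zmod_val, ofAdd_toAdd, Int.cast_natCast, ZMod.natCast_zmod_val]

lemma coeff_aeval_sg {F : ℤ[X]} (hF : F.natDegree < p ^ n) {t : ℕ} (ht : t < p ^ n) :
    (aeval (sg p m n) F).coeff (Multiplicative.ofAdd (t : ZMod (p ^ n))) = F.coeff t := by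
  rw [aeval_eq_sum_range' hF, MonoidAlgebra.coeff_sum, Finsupp.finsetSum_apply,
    Finset.sum_eq_single t]
  · rw [zsmul_eq_mul, sg_pow_eq_single, intCast_eq_single, MonoidAlgebra.single_mul_single,
      one_mul, mul_one, MonoidAlgebra.coeff_single, Finsupp.single_apply, if_pos rfl]
  · intro i hi hit
    rw [zsmul_eq_mul, sg_pow_eq_single, intCast_eq_single, MonoidAlgebra.single_mul_single,
      one_mul, mul_one, MonoidAlgebra.coeff_single, Finsupp.single_apply, if_neg]
    rw [Multiplicative.ofAdd.injective.eq_iff, ZMod.natCast_eq_natCast_iff',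
      Nat.mod_eq_of_lt (Finset.mem_range.mp hi), Nat.mod_eq_of_lt ht]
    exact hit
  · exact fun h => absurd (Finset.mem_range.mpr ht) h

lemma exists_of_aeval_sg_eq_zero [NeZero p] {F : ℤ[X]} (hF : aeval (sg p m n) F = 0) :
    ∃ A B : ℤ[X], F = (p : ℤ[X]) ^ m * A + (X ^ p ^ n - 1) * B := by
  have hq : p ^ n ≠ 0 := pow_ne_zero n (NeZero.ne p)
  have hmonic : (X ^ p ^ n - 1 : ℤ[X]).Monic := monic_X_pow_sub_C 1 hq
  set R := F %ₘ (X ^ p ^ n - 1) with hRdef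
  have hdeg : R.natDegree < p ^ n := by
    have hnat : (X ^ p ^ n - 1 : ℤ[X]).natDegree = p ^ n := by
      simpa using natDegree_X_pow_sub_C (R := ℤ) (n := p ^ n) (r := 1)
    have hne : (X ^ p ^ n - 1 : ℤ[X]) ≠ 1 := fun h => hq (by simpa [h] using hnat.symm)
    simpa [hnat] using natDegree_modByMonic_lt F hmonic hne
  have hR : aeval (sg p m n) R = 0 := by
    rw [hRdef, modByMonic_eq_sub_mul_div F (X ^ p ^ n - 1), map_sub, map_mul, hF]
    simp [sg_pow_card]
  have hdvd : ∀ t, (p : ℤ) ^ m ∣ R.coeff t := by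
    intro t
    rcases lt_or_ge t (p ^ n) with ht | ht
    · have hcoeff := coeff_aeval_sg (m := m) hdeg ht
      rw [hR, MonoidAlgebra.coeff_zero, Finsupp.coe_zero, Pi.zero_apply, eq_comm,
        ZMod.intCast_zmod_eq_zero_iff_dvd] at hcoeff
      exact_mod_cast hcoeff
    · rw [coeff_eq_zero_of_natDegree_lt (hdeg.trans_le ht)]
      exact dvd_zero _
  obtain ⟨A, hA⟩ := (C_dvd_iff_dvd_coeff _ R).mpr hdvd
  refine ⟨A, F /ₘ (X ^ p ^ n - 1), ?_⟩
  calc F = R + (X ^ p ^ n - 1) * (F /ₘ (X ^ p ^ n - 1)) := (modByMonic_add_div F _).symm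
    _ = _ := by rw [hA, C_pow, C_eq_natCast]

end GroupRing

lemma Polynomial.Monic.dvd_of_dvd_smul {R : Type*} [CommRing R] [IsDomain R] {f B : R[X]}
    (hf : f.Monic) {c : R} (hc : c ≠ 0) (h : f ∣ c • B) : f ∣ B := by
  rw [← modByMonic_eq_zero_iff_dvd hf] at h ⊢
  rw [smul_modByMonic] at h
  exact (smul_eq_zero.mp h).resolve_left hc

lemma Polynomial.exists_eq_natCast_mul_of_map_eq_zero {p : ℕ} {F : ℤ[X]}
    (h : F.map (Int.castRingHom (ZMod p)) = 0) : ∃ Z : ℤ[X], F = p * Z := by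
  have hF : F ∈ RingHom.ker (mapRingHom (Int.castRingHom (ZMod p))) := h
  rw [ker_mapRingHom, ZMod.ker_intCastRingHom, Ideal.map_span, Set.image_singleton,
    Ideal.mem_span_singleton] at hF
  obtain ⟨Z, hZ⟩ := hF
  exact ⟨Z, by simpa using hZ⟩

lemma Polynomial.aeval_mem_span_pair_of_map_dvd {S : Type*} [CommRing S] (s : S) {p : ℕ}
    {F G : ℤ[X]} (h : G.map (Int.castRingHom (ZMod p)) ∣ F.map (Int.castRingHom (ZMod p))) :
    aeval s F ∈ Ideal.span {aeval s G, (p : S)} := by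
  obtain ⟨H', hH'⟩ := h
  obtain ⟨H, rfl⟩ := map_surjective _ (ZMod.ringHom_surjective (Int.castRingHom (ZMod p))) H'
  obtain ⟨Z, hZ⟩ := exists_eq_natCast_mul_of_map_eq_zero (p := p) (F := F - G * H)
    (by rw [Polynomial.map_sub, Polynomial.map_mul, hH', sub_self])
  refine Ideal.mem_span_pair.mpr ⟨aeval s H, aeval s Z, ?_⟩
  rw [sub_eq_iff_eq_add] at hZ
  rw [hZ, map_add, map_mul, map_mul, map_natCast]
  ring

lemma sub_one_pow_expChar_pow {R : Type*} [CommRing R] (p : ℕ) [ExpChar R p] (x : R) (k : ℕ) :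
    (x - 1) ^ p ^ k = x ^ p ^ k - 1 := by
  rw [sub_pow_expChar_pow, one_pow]

lemma Ideal.span_pair_pow_le_span_pair_pow {S : Type*} [CommRing S] (x q : S) {i j : ℕ}
    (hij : i ≤ j) : Ideal.span {x ^ j, q} ≤ Ideal.span {x ^ i, q} := by
  refine Ideal.span_le.mpr (Set.pair_subset ?_ (Ideal.subset_span (by simp)))
  rw [← Nat.sub_add_cancel hij, pow_add]
  exact Ideal.mul_mem_left _ _ (Ideal.subset_span (by simp))

lemma mul_mem_span_singleton_mul_of_mem_span_pair {S : Type*} [CommRing S] {q r x y : S}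
    (hrq : r * q = 0) (hx : x ∈ Ideal.span {y, q}) : r * x ∈ Ideal.span {r * y} := by
  obtain ⟨a, b, rfl⟩ := Ideal.mem_span_pair.mp hx
  refine Ideal.mem_span_singleton'.mpr ⟨a, ?_⟩
  linear_combination (-b) * hrq

section Reduction

variable {p m n : ℕ} [Fact p.Prime]

lemma mem_span_sub_one_pow_of_mul_eq_mul (hm : m ≠ 0) {k : ℕ} (hk : k ≤ n) {d : ℤ}
    (hd : (d : ZMod p) = 1) {w c : RG p m n}
    (h : (sg p m n ^ p ^ k - 1) * w = c * (sg p m n - d)) :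
    c ∈ Ideal.span {(sg p m n - 1) ^ (p ^ k - 1), (p : RG p m n)} := by
  obtain ⟨Lw, rfl⟩ := aeval_sg_surjective (m := m) (n := n) w
  obtain ⟨Lc, rfl⟩ := aeval_sg_surjective (m := m) (n := n) c
  obtain ⟨A, B, hAB⟩ := exists_of_aeval_sg_eq_zero (p := p) (m := m) (n := n)
    (F := (X ^ p ^ k - 1) * Lw - Lc * (X - C d)) (by simp [h])
  set φ := Polynomial.map (Int.castRingHom (ZMod p))
  have hmap : (X - 1) ^ p ^ k * φ Lw - φ Lc * (X - 1) = (X - 1) ^ p ^ n * φ B := by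
    have hd' : (d : (ZMod p)[X]) = 1 := by rw [← C_eq_intCast, hd, C_1]
    simpa [φ, sub_one_pow_expChar_pow, hd', zero_pow hm] using congrArg φ hAB
  set e := p ^ k - 1
  have hpk : p ^ k = e + 1 := (Nat.sub_add_cancel (Nat.one_le_pow _ _ (NeZero.pos p))).symm
  have hpn : p ^ n = (p ^ n - p ^ k) + e + 1 := by
    have := Nat.pow_le_pow_right (NeZero.pos p) hk
    omega
  have hfactor : (X - 1) * (φ Lc - (X - 1) ^ e * (φ Lw - (X - 1) ^ (p ^ n - p ^ k) * φ B)) = 0 := by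
    rw [hpk, hpn] at hmap
    linear_combination (-1 : (ZMod p)[X]) * hmap
  have hX : (X - 1 : (ZMod p)[X]) ≠ 0 := by simpa using X_sub_C_ne_zero (1 : ZMod p)
  have hdvd : (X - 1) ^ e ∣ φ Lc :=
    ⟨_, sub_eq_zero.mp ((mul_eq_zero.mp hfactor).resolve_left hX)⟩
  have hspan := aeval_mem_span_pair_of_map_dvd (sg p m n) (p := p) (F := Lc) (G := (X - 1) ^ e)
    (by rwa [Polynomial.map_pow, Polynomial.map_sub, Polynomial.map_X, Polynomial.map_one])
  rwa [map_pow, map_sub, aeval_X, map_one] at hspan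

lemma mem_span_sub_one_pow_of_pow_mul_eq_mul {j k : ℕ} (hj : j < m) (hk : k ≤ n)
    {x u : RG p m n} (h : (p : RG p m n) ^ j * x = (sg p m n ^ p ^ k - 1) * u) :
    x ∈ Ideal.span {(sg p m n - 1) ^ p ^ k, (p : RG p m n)} := by
  obtain ⟨Lx, rfl⟩ := aeval_sg_surjective (m := m) (n := n) x
  obtain ⟨Lu, rfl⟩ := aeval_sg_surjective (m := m) (n := n) u
  obtain ⟨A, B, hAB⟩ := exists_of_aeval_sg_eq_zero (p := p) (m := m) (n := n)
    (F := (p : ℤ[X]) ^ j * Lx - (X ^ p ^ k - 1) * Lu) (by simp [h])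
  obtain ⟨Q, hQ⟩ : X ^ p ^ k - 1 ∣ (X ^ p ^ n - 1 : ℤ[X]) := by
    simpa [← pow_add, Nat.add_sub_cancel' hk] using
      pow_one_sub_dvd_pow_mul_sub_one (X : ℤ[X]) (p ^ k) (p ^ (n - k))
  obtain ⟨W, hW⟩ : X ^ p ^ k - 1 ∣ Lx - p ^ (m - j) * A := by
    refine (monic_X_pow_sub_C 1 (pow_ne_zero k (NeZero.ne p))).dvd_of_dvd_smul
      (c := (p : ℤ) ^ j) (pow_ne_zero j (by exact_mod_cast NeZero.ne p)) ⟨Lu + Q * B, ?_⟩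
    rw [smul_eq_C_mul, C_pow, C_eq_natCast, C_1]
    have hpow : (p : ℤ[X]) ^ j * p ^ (m - j) = p ^ m := by rw [← pow_add, Nat.add_sub_cancel' hj.le]
    linear_combination hAB - A * hpow + B * hQ
  have hmap := congrArg (Polynomial.map (Int.castRingHom (ZMod p))) hW
  simp only [Polynomial.map_sub, Polynomial.map_mul, Polynomial.map_pow, Polynomial.map_natCast,
    CharP.cast_eq_zero, zero_pow (Nat.sub_ne_zero_of_lt hj), zero_mul, sub_zero, Polynomial.map_X,
    Polynomial.map_one, ← sub_one_pow_expChar_pow] at hmap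
  have hspan := aeval_mem_span_pair_of_map_dvd (sg p m n) (p := p) (F := Lx) (G := (X - 1) ^ p ^ k)
    (by rw [Polynomial.map_pow, Polynomial.map_sub, Polynomial.map_X, Polynomial.map_one]
        exact Dvd.intro _ hmap.symm)
  rwa [map_pow, map_sub, aeval_X, map_one] at hspan

end Reduction

lemma exists_relations_of_smul_eq {p m n : ℕ} {a : ℕ → WithBot ℕ} {d : ℤ} {t r : RG p m n}
    {v : Xmod p m n a d} {g : Fin m → RG p m n}
    (h : t • v = r • ∑ i, g i • Xx p m n a d i) :
    ∃ (w : Fin (m + 1) → RG p m n) (c : RG p m n) (c' : Fin m → RG p m n),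
      t * w 0 = c * (sg p m n - d) ∧
      ∀ i : Fin m, r * g i - c * p ^ (i : ℕ) =
        t * w i.succ - c' i * (sigmaPow p m n (a i) - 1) := by
  obtain ⟨w, rfl⟩ := Submodule.Quotient.mk_surjective (Xrel p m n a d) v
  have hrel : t • w - r • ∑ i, g i • (Pi.single i.succ 1 : Fin (m + 1) → RG p m n)
      ∈ Xrel p m n a d := by
    rw [← Submodule.Quotient.eq, ← Submodule.mkQ_apply, ← Submodule.mkQ_apply, map_smul,
      map_smul, map_sum]
    simpa [Xx] using h
  obtain ⟨c, z, hz, hrel⟩ := Submodule.mem_span_insert.mp hrel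
  obtain ⟨c', rfl⟩ := (Submodule.mem_span_range_iff_exists_fun _).mp hz
  refine ⟨w, c, c', ?_, fun i => ?_⟩
  · simpa [Pi.single_apply, Fin.succ_ne_zero] using congrFun hrel 0
  · have hi := congrFun hrel i.succ
    simp [Pi.single_apply] at hi
    linear_combination (-1 : RG p m n) * hi

/-- Lemma 4.2 (`le:indecomp1`). -/
theorem indecomp1 (p n m : ℕ) (hp : p.Prime) (hm : 2 ≤ m)
    (a : ℕ → WithBot ℕ) (d : ℤ) (hyp : Hyp p n m a d)
    (k : ℕ) (hk : a (m - 1) = (k : WithBot ℕ))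
    (v : Xmod p m n a d) (g : Fin m → RG p m n)
    (heq : (sg p m n ^ p ^ k - 1) • v =
      ((p : RG p m n) ^ (m - 1)) • ∑ i : Fin m, g i • Xx p m n a d i) :
    (p : RG p m n) ^ (m - 1) * g ⟨m - 1, by omega⟩ ∈
      Ideal.span {(p : RG p m n) ^ (m - 1) * (sg p m n - 1) ^ (p ^ k - 1)} := by
  have := Fact.mk hp
  have hkn : k ≤ n := by simpa [hk] using hyp.1 (m - 1) (by omega)
  have hd : (d : ZMod p) = 1 := by
    obtain ⟨δ, hδ⟩ := hyp.2.1
    simp [hδ]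
  obtain ⟨w, c, c', hw, hg⟩ := exists_relations_of_smul_eq heq
  have hc := mem_span_sub_one_pow_of_mul_eq_mul (by omega) hkn hd hw
  have hsig : sigmaPow p m n (a (m - 1)) = sg p m n ^ p ^ k := by rw [hk]; rfl
  have hlast := hg ⟨m - 1, by omega⟩
  rw [Fin.val_mk, hsig] at hlast
  have hgc := mem_span_sub_one_pow_of_pow_mul_eq_mul (by omega : m - 1 < m) hkn
    (x := g ⟨m - 1, by omega⟩ - c) (u := w (Fin.succ ⟨m - 1, by omega⟩) - c' ⟨m - 1, by omega⟩)
    (by linear_combination hlast)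
  have hle := Ideal.span_pair_pow_le_span_pair_pow (sg p m n - 1) (p : RG p m n)
    (Nat.sub_le (p ^ k) 1)
  have hpm : (p : RG p m n) ^ (m - 1) * p = 0 := by
    rw [← pow_succ, Nat.sub_add_cancel (by omega), natCast_pow_eq_zero]
  exact mul_mem_span_singleton_mul_of_mem_span_pair hpm (by simpa using add_mem (hle hgc) hc)
end
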